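/- arXiv:2308.04318 — 6 statements merged into one kernel-verified Lean document; each statement's English description precedes it below -/
import Mathlib

section
/- Let Ω ⊆ ℝ² be an open set with coordinates (t,x), and let u, ρ : Ω → ℝ be continuously differentiable functions with ρ(t,x) > 0 for every (t,x) ∈ Ω, satisfying on Ω the two conservation laws ∂_t ρ + ∂_x(uρ) = 0 and ∂_t(uρ) + ∂_x(u²ρ − (π²/3)ρ³) = 0. Then the complex-valued function f = u + iπρ satisfies the complex Burgers equation ∂_t f(t,x) + f(t,x)·∂_x f(t,x) = 0 for every (t,x) ∈ Ω. -/
open Real Set MeasureTheory Filter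
open scoped ENNReal

noncomputable section

/-- The partial derivative of `F : ℝ × ℝ → ℝ` in its first (time) variable. -/
def pdT (F : ℝ × ℝ → ℝ) : ℝ × ℝ → ℝ := fun z => deriv (fun s => F (s, z.2)) z.1

/-- The partial derivative of `F : ℝ × ℝ → ℝ` in its second (space) variable. -/
def pdX (F : ℝ × ℝ → ℝ) : ℝ × ℝ → ℝ := fun z => deriv (fun s => F (z.1, s)) z.2

/-- The iterated partial derivative `∂_t^i ∂_x^j F`. -/
def pdIter (F : ℝ × ℝ → ℝ) (i j : ℕ) : ℝ × ℝ → ℝ := pdT^[i] (pdX^[j] F)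

/-- The nonlinear second-order operator appearing in equation (B):
`(∂_x F)² ∂_t² F − 2 (∂_t F)(∂_x F) ∂_t∂_x F + ((∂_t F)² + π² (∂_x F)⁴) ∂_x² F`. -/
def BExpr (F : ℝ × ℝ → ℝ) (z : ℝ × ℝ) : ℝ :=
  (pdX F z) ^ 2 * pdT (pdT F) z - 2 * pdT F z * pdX F z * pdT (pdX F) z +
    ((pdT F z) ^ 2 + π ^ 2 * (pdX F z) ^ 4) * pdX (pdX F) z

/-- `F` satisfies equation (B) on `Ω`. -/
def SatisfiesB (F : ℝ × ℝ → ℝ) (Ω : Set (ℝ × ℝ)) : Prop := ∀ z ∈ Ω, BExpr F z = 0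

/-- `G` satisfies equation (E) on `R`:  `∂_y G ≠ 0` and
`∂_t² G + π² (∂_y G)⁻⁴ ∂_y² G = 0` at every point of `R`. -/
def SatisfiesE (G : ℝ × ℝ → ℝ) (R : Set (ℝ × ℝ)) : Prop :=
  ∀ z ∈ R, pdX G z ≠ 0 ∧
    pdT (pdT G) z + π ^ 2 * ((pdX G z) ^ 4)⁻¹ * pdX (pdX G) z = 0

/-- Admissible functions on `R`: continuous on `closure R`, differentiable on `R`, with
strictly negative partial derivative in the second variable. -/
def Adm (F : ℝ × ℝ → ℝ) (R : Set (ℝ × ℝ)) : Prop :=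
  ContinuousOn F (closure R) ∧ DifferentiableOn ℝ F R ∧ ∀ z ∈ R, pdX F z < 0

/-- `ε`-admissible functions on `R`: the partial derivative in the second variable lies
strictly between `-ε⁻¹` and `-ε`. -/
def AdmE (ε : ℝ) (F : ℝ × ℝ → ℝ) (R : Set (ℝ × ℝ)) : Prop :=
  ContinuousOn F (closure R) ∧ DifferentiableOn ℝ F R ∧
    ∀ z ∈ R, -ε⁻¹ < pdX F z ∧ pdX F z < -ε

/-- The `C^m` norm `∑_{j=0}^m max_{i ≤ j} sup_{z ∈ R} |∂_t^i ∂_x^{j-i} F(z)|`,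
valued in `ℝ≥0∞`. -/
def CmNorm (m : ℕ) (F : ℝ × ℝ → ℝ) (R : Set (ℝ × ℝ)) : ℝ≥0∞ :=
  ∑ j ∈ Finset.range (m + 1),
    ⨆ i ∈ Finset.range (j + 1), ⨆ z ∈ R, ENNReal.ofReal |pdIter F i (j - i) z|

/-- The one-dimensional `C^m` norm `∑_{j=0}^m sup_{x ∈ S} |f^{(j)}(x)|`, valued in `ℝ≥0∞`. -/
def CmNorm1 (m : ℕ) (f : ℝ → ℝ) (S : Set ℝ) : ℝ≥0∞ :=
  ∑ j ∈ Finset.range (m + 1), ⨆ x ∈ S, ENNReal.ofReal |deriv^[j] f x|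

/-- `R` has `C^k` boundary. -/
def HasCkBoundary (k : ℕ) (R : Set (ℝ × ℝ)) : Prop :=
  ∀ z₀ ∈ frontier R, ∃ (r : ℝ) (ψ ψinv : ℝ × ℝ → ℝ × ℝ), 0 < r ∧
    Set.InjOn ψ (Metric.ball z₀ r) ∧
    (∀ w ∈ Metric.ball z₀ r ∩ R, 0 < (ψ w).1) ∧
    (∀ w ∈ Metric.ball z₀ r ∩ frontier R, (ψ w).1 = 0) ∧
    ContDiffOn ℝ k ψ (Metric.ball z₀ r) ∧
    ContDiffOn ℝ k ψinv (ψ '' (Metric.ball z₀ r ∩ R)) ∧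
    ∀ w ∈ Metric.ball z₀ r, ψinv (ψ w) = w

/-- The set `𝔇_r = {z ∈ R : dist(z, ∂R ∖ ∂R') > r}`. -/
def Dset (r : ℝ) (R R' : Set (ℝ × ℝ)) : Set (ℝ × ℝ) :=
  {z ∈ R | ENNReal.ofReal r < EMetric.infEdist z (frontier R \ frontier R')}

def pdTC (F : ℝ × ℝ → ℂ) : ℝ × ℝ → ℂ := fun z => deriv (fun s => F (s, z.2)) z.1

def pdXC (F : ℝ × ℝ → ℂ) : ℝ × ℝ → ℂ := fun z => deriv (fun s => F (z.1, s)) z.2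

theorem statement0 (Ω : Set (ℝ × ℝ)) (hΩ : IsOpen Ω) (u ρ : ℝ × ℝ → ℝ)
    (hu : ContDiffOn ℝ 1 u Ω) (hρ : ContDiffOn ℝ 1 ρ Ω)
    (hρpos : ∀ z ∈ Ω, 0 < ρ z)
    (hmass : ∀ z ∈ Ω, pdT ρ z + pdX (fun w => u w * ρ w) z = 0)
    (hmom : ∀ z ∈ Ω, pdT (fun w => u w * ρ w) z +
      pdX (fun w => (u w) ^ 2 * ρ w - (π ^ 2 / 3) * (ρ w) ^ 3) z = 0)
    (f : ℝ × ℝ → ℂ)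
    (hf : f = fun w => (u w : ℂ) + Complex.I * (π : ℂ) * (ρ w : ℂ)) :
    ∀ z ∈ Ω, pdTC f z + f z * pdXC f z = 0 := by
  subst hf
  intro z hz
  have hzn : Ω ∈ nhds z := hΩ.mem_nhds hz
  have hud : DifferentiableAt ℝ u z := (hu.contDiffAt hzn).differentiableAt one_ne_zero
  have hrd : DifferentiableAt ℝ ρ z := (hρ.contDiffAt hzn).differentiableAt one_ne_zero
  have hT : DifferentiableAt ℝ (fun s : ℝ => ((s, z.2) : ℝ × ℝ)) z.1 :=
    differentiableAt_id.prodMk (differentiableAt_const _)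
  have hX : DifferentiableAt ℝ (fun s : ℝ => ((z.1, s) : ℝ × ℝ)) z.2 :=
    (differentiableAt_const _).prodMk differentiableAt_id
  have HuT : HasDerivAt (fun s => u (s, z.2)) (pdT u z) z.1 :=
    (hud.comp z.1 hT).hasDerivAt
  have HrT : HasDerivAt (fun s => ρ (s, z.2)) (pdT ρ z) z.1 :=
    (hrd.comp z.1 hT).hasDerivAt
  have HuX : HasDerivAt (fun s => u (z.1, s)) (pdX u z) z.2 :=
    (hud.comp z.2 hX).hasDerivAt
  have HrX : HasDerivAt (fun s => ρ (z.1, s)) (pdX ρ z) z.2 :=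
    (hrd.comp z.2 hX).hasDerivAt
  -- expand the conservation laws
  have M1 : pdT ρ z + (pdX u z * ρ z + u z * pdX ρ z) = 0 := by
    have e : pdX (fun w => u w * ρ w) z = pdX u z * ρ z + u z * pdX ρ z :=
      (HuX.mul HrX).deriv
    have := hmass z hz
    rw [e] at this
    exact this
  have M2 : (pdT u z * ρ z + u z * pdT ρ z) +
      ((2 * u z ^ 1 * pdX u z) * ρ z + u z ^ 2 * pdX ρ z
        - (π ^ 2 / 3) * (3 * ρ z ^ 2 * pdX ρ z)) = 0 := by
    have e1 : pdT (fun w => u w * ρ w) z = pdT u z * ρ z + u z * pdT ρ z :=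
      (HuT.mul HrT).deriv
    have e2 : pdX (fun w => (u w) ^ 2 * ρ w - (π ^ 2 / 3) * (ρ w) ^ 3) z
        = (2 * u z ^ 1 * pdX u z) * ρ z + u z ^ 2 * pdX ρ z
          - (π ^ 2 / 3) * (3 * ρ z ^ 2 * pdX ρ z) := by
      have h3 : HasDerivAt (fun s => (ρ (z.1, s)) ^ 3) (3 * ρ z ^ 2 * pdX ρ z) z.2 := by
        simpa using HrX.fun_pow 3
      have h2 : HasDerivAt (fun s => (u (z.1, s)) ^ 2 * ρ (z.1, s))
          ((2 * u z ^ 1 * pdX u z) * ρ z + u z ^ 2 * pdX ρ z) z.2 :=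
        (HuX.pow 2).mul HrX
      exact (h2.sub (h3.const_mul (π ^ 2 / 3))).deriv
    have := hmom z hz
    rw [e1, e2] at this
    exact this
  -- key real identities
  have hρ0 : ρ z ≠ 0 := (hρpos z hz).ne'
  have key : ρ z * (pdT u z + u z * pdX u z - π ^ 2 * ρ z * pdX ρ z) = 0 := by
    linear_combination M2 - u z * M1
  have h1 : pdT u z + u z * pdX u z - π ^ 2 * ρ z * pdX ρ z = 0 :=
    (mul_eq_zero.mp key).resolve_left hρ0
  have h2 : pdT ρ z + u z * pdX ρ z + ρ z * pdX u z = 0 := by linarith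
  -- complex derivatives
  have HfT : pdTC (fun w => (u w : ℂ) + Complex.I * (π : ℂ) * (ρ w : ℂ)) z
      = (pdT u z : ℂ) + Complex.I * (π : ℂ) * (pdT ρ z : ℂ) :=
    (HuT.ofReal_comp.add (HrT.ofReal_comp.const_mul (Complex.I * (π : ℂ)))).deriv
  have HfX : pdXC (fun w => (u w : ℂ) + Complex.I * (π : ℂ) * (ρ w : ℂ)) z
      = (pdX u z : ℂ) + Complex.I * (π : ℂ) * (pdX ρ z : ℂ) :=
    (HuX.ofReal_comp.add (HrX.ofReal_comp.const_mul (Complex.I * (π : ℂ)))).deriv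
  rw [HfT, HfX]
  have h1' : ((pdT u z : ℂ) + u z * pdX u z - (π : ℂ) ^ 2 * ρ z * pdX ρ z) = 0 := by
    exact_mod_cast congrArg (Complex.ofReal) h1
  have h2' : ((pdT ρ z : ℂ) + u z * pdX ρ z + ρ z * pdX u z) = 0 := by
    exact_mod_cast congrArg (Complex.ofReal) h2
  linear_combination h1' + Complex.I * (π : ℂ) * h2'
    + (π : ℂ) ^ 2 * (ρ z : ℂ) * (pdX ρ z : ℂ) * Complex.I_sq
end
end

section
/- Let Ω ⊆ ℝ² be an open set with coordinates (t,x); let u, ρ : Ω → ℝ be continuously differentiable with ρ > 0 on Ω; and let H : Ω → ℝ be twice continuously differentiable with ∂_x H = −ρ and ∂_t H = uρ on Ω. If ∂_t ρ + ∂_x(uρ) = 0 and ∂_t(uρ) + ∂_x(u²ρ − (π²/3)ρ³) = 0 hold on Ω, then H satisfies equation (B) on Ω, that is, (∂_xH)²·∂_t²H − 2(∂_tH)(∂_xH)·∂_t∂_xH + ((∂_tH)² + π²(∂_xH)⁴)·∂_x²H = 0 at every point of Ω. -/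
open Real Set MeasureTheory Filter
open scoped ENNReal

noncomputable section

theorem statement1 (Ω : Set (ℝ × ℝ)) (hΩ : IsOpen Ω) (u ρ H : ℝ × ℝ → ℝ)
    (hu : ContDiffOn ℝ 1 u Ω) (hρ : ContDiffOn ℝ 1 ρ Ω) (hH : ContDiffOn ℝ 2 H Ω)
    (hρpos : ∀ z ∈ Ω, 0 < ρ z)
    (hHx : ∀ z ∈ Ω, pdX H z = -ρ z)
    (hHt : ∀ z ∈ Ω, pdT H z = u z * ρ z)
    (hmass : ∀ z ∈ Ω, pdT ρ z + pdX (fun w => u w * ρ w) z = 0)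
    (hmom : ∀ z ∈ Ω, pdT (fun w => u w * ρ w) z +
      pdX (fun w => (u w) ^ 2 * ρ w - (π ^ 2 / 3) * (ρ w) ^ 3) z = 0) :
    SatisfiesB H Ω := by
  intro z hz
  have hzmem : Ω ∈ nhds z := hΩ.mem_nhds hz
  have hud : DifferentiableAt ℝ u z := (hu.contDiffAt hzmem).differentiableAt one_ne_zero
  have hρd : DifferentiableAt ℝ ρ z := (hρ.contDiffAt hzmem).differentiableAt one_ne_zero
  have hXd : DifferentiableAt ℝ (fun s : ℝ => ((z.1, s) : ℝ × ℝ)) z.2 :=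
    (differentiableAt_const _).prodMk differentiableAt_id
  have hTd : DifferentiableAt ℝ (fun s : ℝ => ((s, z.2) : ℝ × ℝ)) z.1 :=
    differentiableAt_id.prodMk (differentiableAt_const _)
  have huX : DifferentiableAt ℝ (fun s => u (z.1, s)) z.2 := by
    exact hud.comp z.2 hXd
  have hρX : DifferentiableAt ℝ (fun s => ρ (z.1, s)) z.2 := by
    exact hρd.comp z.2 hXd
  have huT : DifferentiableAt ℝ (fun s => u (s, z.2)) z.1 := by
    exact hud.comp z.1 hTd
  have hρT : DifferentiableAt ℝ (fun s => ρ (s, z.2)) z.1 := by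
    exact hρd.comp z.1 hTd
  have hEx : ∀ᶠ s in nhds z.2, ((z.1, s) : ℝ × ℝ) ∈ Ω := by
    have hc : ContinuousAt (fun s : ℝ => ((z.1, s) : ℝ × ℝ)) z.2 :=
      (continuous_const.prodMk continuous_id).continuousAt
    exact hc.preimage_mem_nhds hzmem
  have hEt : ∀ᶠ s in nhds z.1, ((s, z.2) : ℝ × ℝ) ∈ Ω := by
    have hc : ContinuousAt (fun s : ℝ => ((s, z.2) : ℝ × ℝ)) z.1 :=
      (continuous_id.prodMk continuous_const).continuousAt
    exact hc.preimage_mem_nhds hzmem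
  -- second derivatives of H in terms of ρ and uρ
  have fact1 : pdX (pdX H) z = -pdX ρ z := by
    have h1 : (fun s => pdX H (z.1, s)) =ᶠ[nhds z.2] fun s => -ρ (z.1, s) :=
      hEx.mono fun s hs => hHx _ hs
    show deriv (fun s => pdX H (z.1, s)) z.2 = _
    rw [h1.deriv_eq, deriv.fun_neg]
    rfl
  have fact2 : pdT (pdX H) z = -pdT ρ z := by
    have h1 : (fun s => pdX H (s, z.2)) =ᶠ[nhds z.1] fun s => -ρ (s, z.2) :=
      hEt.mono fun s hs => hHx _ hs
    show deriv (fun s => pdX H (s, z.2)) z.1 = _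
    rw [h1.deriv_eq, deriv.fun_neg]
    rfl
  have fact3 : pdT (pdT H) z = pdT (fun w => u w * ρ w) z := by
    have h1 : (fun s => pdT H (s, z.2)) =ᶠ[nhds z.1] fun s => u (s, z.2) * ρ (s, z.2) :=
      hEt.mono fun s hs => hHt _ hs
    show deriv (fun s => pdT H (s, z.2)) z.1 = _
    rw [h1.deriv_eq]
    rfl
  -- product rules in x
  have HuX : HasDerivAt (fun s => u (z.1, s)) (pdX u z) z.2 := huX.hasDerivAt
  have HρX : HasDerivAt (fun s => ρ (z.1, s)) (pdX ρ z) z.2 := hρX.hasDerivAt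
  have hmul : pdX (fun w => u w * ρ w) z = pdX u z * ρ z + u z * pdX ρ z := by
    have := (HuX.fun_mul HρX).deriv
    simpa [pdX] using this
  have hflux : pdX (fun w => (u w) ^ 2 * ρ w - (π ^ 2 / 3) * (ρ w) ^ 3) z =
      ((2 : ℕ) * u z ^ 1 * pdX u z) * ρ z + u z ^ 2 * pdX ρ z
        - (π ^ 2 / 3) * ((3 : ℕ) * ρ z ^ 2 * pdX ρ z) := by
    have := (((HuX.fun_pow 2).fun_mul HρX).fun_sub ((HρX.fun_pow 3).const_mul (π ^ 2 / 3))).deriv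
    simpa [pdX] using this
  -- conservation laws give the t-derivatives
  have hmass' : pdT ρ z = -(pdX u z * ρ z + u z * pdX ρ z) := by
    have := hmass z hz
    rw [hmul] at this
    linarith
  have hmom' : pdT (fun w => u w * ρ w) z =
      -(((2 : ℕ) * u z ^ 1 * pdX u z) * ρ z + u z ^ 2 * pdX ρ z
        - (π ^ 2 / 3) * ((3 : ℕ) * ρ z ^ 2 * pdX ρ z)) := by
    have := hmom z hz
    rw [hflux] at this
    linarith
  unfold BExpr
  rw [fact1, fact2, fact3, hmom', hmass', hHx z hz, hHt z hz]
  push_cast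
  ring
end
end

section
/- Let Ω, Ω' ⊆ ℝ² be open sets; let H be twice continuously differentiable on Ω and let G be twice continuously differentiable on Ω'. Suppose that for every (t,y) ∈ Ω' one has (t, G(t,y)) ∈ Ω and H(t, G(t,y)) = y, and that H satisfies equation (B) at the point (t, G(t,y)). Then G satisfies equation (E) on Ω': for every (t,y) ∈ Ω', ∂_yG(t,y) ≠ 0 and ∂_t²G(t,y) + π²·(∂_yG(t,y))⁻⁴·∂_y²G(t,y) = 0. -/
open Real Set MeasureTheory Filter
open scoped ENNReal

noncomputable section

/-!
Differentiating `H (t, G (t, y)) = y` in `y` and in `t` gives `∂ₓH · ∂_yG = 1` and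
`∂ₜH + ∂ₓH · ∂ₜG = 0`; differentiating these identities once more expresses `∂ₓH · ∂_y²G` and
`∂ₓH · ∂ₜ²G` through the second derivatives of `H` (the mixed ones agree by Schwarz). Substituting
into (B) leaves `(∂ₓH)³ (∂ₜ²G + π² (∂ₓH)⁴ ∂_y²G) = 0`, and `∂ₓH = (∂_yG)⁻¹ ≠ 0`.
-/

open Topology

section PartialDerivatives

variable {F K G : ℝ × ℝ → ℝ} {F' : ℝ × ℝ →L[ℝ] ℝ} {U : Set (ℝ × ℝ)} {z : ℝ × ℝ}

theorem eventually_slice_fst {P : ℝ × ℝ → Prop} (h : ∀ᶠ w in 𝓝 z, P w) :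
    ∀ᶠ s in 𝓝 z.1, P (s, z.2) :=
  ((continuous_id.prodMk continuous_const).tendsto' z.1 z rfl).eventually h

theorem eventually_slice_snd {P : ℝ × ℝ → Prop} (h : ∀ᶠ w in 𝓝 z, P w) :
    ∀ᶠ s in 𝓝 z.2, P (z.1, s) :=
  ((continuous_const.prodMk continuous_id).tendsto' z.2 z rfl).eventually h

theorem pdT_congr_of_eventuallyEq (h : F =ᶠ[𝓝 z] K) : pdT F z = pdT K z :=
  EventuallyEq.deriv_eq (eventually_slice_fst h)

theorem pdX_congr_of_eventuallyEq (h : F =ᶠ[𝓝 z] K) : pdX F z = pdX K z :=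
  EventuallyEq.deriv_eq (eventually_slice_snd h)

theorem HasFDerivAt.hasDerivAt_slice_fst (h : HasFDerivAt F F' z) :
    HasDerivAt (fun s => F (s, z.2)) (F' (1, 0)) z.1 :=
  h.comp_hasDerivAt z.1 ((hasDerivAt_id _).prodMk (hasDerivAt_const _ _))

theorem HasFDerivAt.hasDerivAt_slice_snd (h : HasFDerivAt F F' z) :
    HasDerivAt (fun s => F (z.1, s)) (F' (0, 1)) z.2 :=
  h.comp_hasDerivAt z.2 ((hasDerivAt_const _ _).prodMk (hasDerivAt_id _))

theorem HasFDerivAt.pdT_eq (h : HasFDerivAt F F' z) : pdT F z = F' (1, 0) :=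
  h.hasDerivAt_slice_fst.deriv

theorem HasFDerivAt.pdX_eq (h : HasFDerivAt F F' z) : pdX F z = F' (0, 1) :=
  h.hasDerivAt_slice_snd.deriv

theorem DifferentiableAt.hasDerivAt_pdT (h : DifferentiableAt ℝ F z) :
    HasDerivAt (fun s => F (s, z.2)) (pdT F z) z.1 :=
  h.hasFDerivAt.pdT_eq ▸ h.hasFDerivAt.hasDerivAt_slice_fst

theorem DifferentiableAt.hasDerivAt_pdX (h : DifferentiableAt ℝ F z) :
    HasDerivAt (fun s => F (z.1, s)) (pdX F z) z.2 :=
  h.hasFDerivAt.pdX_eq ▸ h.hasFDerivAt.hasDerivAt_slice_snd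

theorem hasDerivAt_comp_graph_fst (hK : DifferentiableAt ℝ K (z.1, G z))
    (hG : DifferentiableAt ℝ G z) :
    HasDerivAt (fun s => K (s, G (s, z.2))) (pdT K (z.1, G z) + pdX K (z.1, G z) * pdT G z)
      z.1 := by
  have hK' := hK.hasFDerivAt
  have hcomp := hK'.comp_hasDerivAt z.1 ((hasDerivAt_id _).prodMk hG.hasDerivAt_pdT)
  have hsplit : ((1 : ℝ), pdT G z) = (1, 0) + pdT G z • (0, 1) := by simp
  rwa [hsplit, map_add, map_smul, smul_eq_mul, mul_comm, ← hK'.pdT_eq, ← hK'.pdX_eq] at hcomp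

theorem hasDerivAt_comp_graph_snd (hK : DifferentiableAt ℝ K (z.1, G z))
    (hG : DifferentiableAt ℝ G z) :
    HasDerivAt (fun s => K (z.1, G (z.1, s))) (pdX K (z.1, G z) * pdX G z) z.2 := by
  have hK' := hK.hasFDerivAt
  have hcomp := hK'.comp_hasDerivAt z.2 ((hasDerivAt_const z.2 z.1).prodMk hG.hasDerivAt_pdX)
  have hsplit : ((0 : ℝ), pdX G z) = pdX G z • (0, 1) := by simp
  rwa [hsplit, map_smul, smul_eq_mul, mul_comm, ← hK'.pdX_eq] at hcomp

theorem ContDiffOn.pdT {n : WithTop ℕ∞} (hF : ContDiffOn ℝ (n + 1) F U) (hU : IsOpen U) :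
    ContDiffOn ℝ n (pdT F) U :=
  ((hF.fderiv_of_isOpen hU le_rfl).clm_apply contDiffOn_const).congr fun _ hw =>
    ((hF.differentiableOn (by simp)).differentiableAt (hU.mem_nhds hw)).hasFDerivAt.pdT_eq

theorem ContDiffOn.pdX {n : WithTop ℕ∞} (hF : ContDiffOn ℝ (n + 1) F U) (hU : IsOpen U) :
    ContDiffOn ℝ n (pdX F) U :=
  ((hF.fderiv_of_isOpen hU le_rfl).clm_apply contDiffOn_const).congr fun _ hw =>
    ((hF.differentiableOn (by simp)).differentiableAt (hU.mem_nhds hw)).hasFDerivAt.pdX_eq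

theorem pdX_pdT_eq_pdT_pdX (hF : ContDiffAt ℝ 2 F z) :
    pdX (pdT F) z = pdT (pdX F) z := by
  have hF' : ∀ᶠ w in 𝓝 z, HasFDerivAt F (fderiv ℝ F w) w :=
    (hF.eventually (by simp)).mono fun w hw => (hw.differentiableAt (by simp)).hasFDerivAt
  have hF'' : HasFDerivAt (fderiv ℝ F) (fderiv ℝ (fderiv ℝ F) z) z :=
    ((hF.fderiv_right (m := 1) le_rfl).differentiableAt one_ne_zero).hasFDerivAt
  have hT : pdT F =ᶠ[𝓝 z] fun w => fderiv ℝ F w (1, 0) := hF'.mono fun w hw => hw.pdT_eq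
  have hX : pdX F =ᶠ[𝓝 z] fun w => fderiv ℝ F w (0, 1) := hF'.mono fun w hw => hw.pdX_eq
  rw [pdX_congr_of_eventuallyEq hT, pdT_congr_of_eventuallyEq hX,
    (hF''.clm_apply (hasFDerivAt_const _ _)).pdX_eq,
    (hF''.clm_apply (hasFDerivAt_const _ _)).pdT_eq]
  simpa using second_derivative_symmetric_of_eventually hF' hF'' (0, 1) (1, 0)

end PartialDerivatives

section InverseInSecondVariable

variable {H G : ℝ × ℝ → ℝ} {z : ℝ × ℝ}

theorem pdX_mul_pdX_eq_one_of_inverse (hH : DifferentiableAt ℝ H (z.1, G z))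
    (hG : DifferentiableAt ℝ G z) (hinv : ∀ᶠ w in 𝓝 z, H (w.1, G w) = w.2) :
    pdX H (z.1, G z) * pdX G z = 1 :=
  ((hasDerivAt_comp_graph_snd hH hG).congr_of_eventuallyEq
    ((eventually_slice_snd hinv).mono fun _ hs => hs.symm)).unique (hasDerivAt_id' z.2)

theorem pdT_add_pdX_mul_pdT_eq_zero_of_inverse (hH : DifferentiableAt ℝ H (z.1, G z))
    (hG : DifferentiableAt ℝ G z) (hinv : ∀ᶠ w in 𝓝 z, H (w.1, G w) = w.2) :
    pdT H (z.1, G z) + pdX H (z.1, G z) * pdT G z = 0 :=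
  ((hasDerivAt_comp_graph_fst hH hG).congr_of_eventuallyEq
    ((eventually_slice_fst hinv).mono fun _ hs => hs.symm)).unique (hasDerivAt_const z.1 z.2)

theorem pdX_mul_pdX_pdX_eq_of_inverse (hHx : DifferentiableAt ℝ (pdX H) (z.1, G z))
    (hG : DifferentiableAt ℝ G z) (hGx : DifferentiableAt ℝ (pdX G) z)
    (hinv₁ : ∀ᶠ w in 𝓝 z, pdX H (w.1, G w) * pdX G w = 1) :
    pdX H (z.1, G z) * pdX (pdX G) z = -(pdX (pdX H) (z.1, G z) * pdX G z ^ 2) := by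
  have h := (((hasDerivAt_comp_graph_snd hHx hG).mul hGx.hasDerivAt_pdX).congr_of_eventuallyEq
    ((eventually_slice_snd hinv₁).mono fun _ hs => hs.symm)).unique (hasDerivAt_const z.2 1)
  linear_combination h

theorem pdX_mul_pdT_pdT_eq_of_inverse (hHt : DifferentiableAt ℝ (pdT H) (z.1, G z))
    (hHx : DifferentiableAt ℝ (pdX H) (z.1, G z)) (hG : DifferentiableAt ℝ G z)
    (hGt : DifferentiableAt ℝ (pdT G) z)
    (hinv₁ : ∀ᶠ w in 𝓝 z, pdT H (w.1, G w) + pdX H (w.1, G w) * pdT G w = 0) :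
    pdX H (z.1, G z) * pdT (pdT G) z =
      -(pdT (pdT H) (z.1, G z) + (pdX (pdT H) (z.1, G z) + pdT (pdX H) (z.1, G z)) * pdT G z
        + pdX (pdX H) (z.1, G z) * pdT G z ^ 2) := by
  have h := (((hasDerivAt_comp_graph_fst hHt hG).add
    ((hasDerivAt_comp_graph_fst hHx hG).mul hGt.hasDerivAt_pdT)).congr_of_eventuallyEq
    ((eventually_slice_fst hinv₁).mono fun _ hs => hs.symm)).unique (hasDerivAt_const z.1 0)
  linear_combination h

end InverseInSecondVariable

/-- `a, b, A, M, C` stand for `∂ₜH, ∂ₓH, ∂ₜ²H, ∂ₜ∂ₓH, ∂ₓ²H` at `(t, G (t, y))`, and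
`gt, gy, At, Ay` for `∂ₜG, ∂_yG, ∂ₜ²G, ∂_y²G` at `(t, y)`. -/
theorem E_of_B_of_inverse_jets {κ a b A M C gt gy At Ay : ℝ} (h₁ : b * gy = 1)
    (h₂ : a + b * gt = 0) (hyy : b * Ay = -(C * gy ^ 2))
    (htt : b * At = -(A + (M + M) * gt + C * gt ^ 2))
    (hB : b ^ 2 * A - 2 * a * b * M + (a ^ 2 + κ * b ^ 4) * C = 0) :
    At + κ * (gy ^ 4)⁻¹ * Ay = 0 := by
  have hb : b ≠ 0 := left_ne_zero_of_mul_eq_one h₁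
  have hgy : (gy ^ 4)⁻¹ = b ^ 4 := by rw [← inv_pow, ← eq_inv_of_mul_eq_one_left h₁]
  have hAt : b ^ 3 * At = κ * b ^ 4 * C := by
    linear_combination b ^ 2 * htt - hB - (2 * b * M - C * (a - b * gt)) * h₂
  have hC : C = -(b ^ 3 * Ay) := by linear_combination b ^ 2 * hyy - C * (b * gy + 1) * h₁
  have h : b ^ 3 * (At + κ * b ^ 4 * Ay) = 0 := by linear_combination hAt + κ * b ^ 4 * hC
  rw [hgy]
  exact (mul_eq_zero.1 h).resolve_left (pow_ne_zero 3 hb)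

theorem statement2 (Ω Ω' : Set (ℝ × ℝ)) (hΩ : IsOpen Ω) (hΩ' : IsOpen Ω')
    (H G : ℝ × ℝ → ℝ) (hH : ContDiffOn ℝ 2 H Ω) (hG : ContDiffOn ℝ 2 G Ω')
    (hmem : ∀ z ∈ Ω', (z.1, G z) ∈ Ω)
    (hinv : ∀ z ∈ Ω', H (z.1, G z) = z.2)
    (hB : ∀ z ∈ Ω', BExpr H (z.1, G z) = 0) :
    SatisfiesE G Ω' := by
  have hH₁ : ∀ w ∈ Ω', DifferentiableAt ℝ H (w.1, G w) := fun w hw =>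
    (hH.differentiableOn (by simp)).differentiableAt (hΩ.mem_nhds (hmem w hw))
  have hG₁ : ∀ w ∈ Ω', DifferentiableAt ℝ G w := fun w hw =>
    (hG.differentiableOn (by simp)).differentiableAt (hΩ'.mem_nhds hw)
  have hinv_nhds : ∀ w ∈ Ω', ∀ᶠ v in 𝓝 w, H (v.1, G v) = v.2 := fun w hw =>
    eventually_of_mem (hΩ'.mem_nhds hw) hinv
  have hy : ∀ w ∈ Ω', pdX H (w.1, G w) * pdX G w = 1 := fun w hw =>
    pdX_mul_pdX_eq_one_of_inverse (hH₁ w hw) (hG₁ w hw) (hinv_nhds w hw)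
  have ht : ∀ w ∈ Ω', pdT H (w.1, G w) + pdX H (w.1, G w) * pdT G w = 0 := fun w hw =>
    pdT_add_pdX_mul_pdT_eq_zero_of_inverse (hH₁ w hw) (hG₁ w hw) (hinv_nhds w hw)
  intro z hz
  have hp := hΩ.mem_nhds (hmem z hz)
  have hz' := hΩ'.mem_nhds hz
  have hHt := ((hH.pdT (n := 1) hΩ).differentiableOn one_ne_zero).differentiableAt hp
  have hHx := ((hH.pdX (n := 1) hΩ).differentiableOn one_ne_zero).differentiableAt hp
  have hGt := ((hG.pdT (n := 1) hΩ').differentiableOn one_ne_zero).differentiableAt hz'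
  have hGx := ((hG.pdX (n := 1) hΩ').differentiableOn one_ne_zero).differentiableAt hz'
  have hyy := pdX_mul_pdX_pdX_eq_of_inverse hHx (hG₁ z hz) hGx (eventually_of_mem hz' hy)
  have htt := pdX_mul_pdT_pdT_eq_of_inverse hHt hHx (hG₁ z hz) hGt (eventually_of_mem hz' ht)
  rw [pdX_pdT_eq_pdT_pdX (hH.contDiffAt hp)] at htt
  exact ⟨right_ne_zero_of_mul_eq_one (hy z hz),
    E_of_B_of_inverse_jets (hy z hz) (ht z hz) hyy htt (hB z hz)⟩
end
end

section
/- Fix a bounded open set R ⊂ ℝ², and let F₁, F₂, F ∈ Adm(R) ∩ C²(R) be solutions to equation (E) on R. Then: (1) if F₁(z) ≤ F₂(z) for every z ∈ ∂R, then F₁(z) ≤ F₂(z) for every z ∈ R; (2) sup_{z∈R}|F₁(z) − F₂(z)| ≤ sup_{z∈∂R}|F₁(z) − F₂(z)|, and in particular sup_{z∈R}|F(z)| = sup_{z∈∂R}|F(z)|. -/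
open Real Set MeasureTheory Filter
open scoped ENNReal

noncomputable section

/-! ### Auxiliary lemmas -/

lemma sdt_aux {f : ℝ → ℝ} {x : ℝ} (hmax : IsLocalMax f x)
    (hf : ∀ᶠ s in nhds x, DifferentiableAt ℝ f s)
    (hf' : DifferentiableAt ℝ (deriv f) x) : deriv (deriv f) x ≤ 0 := by
  by_contra hK
  push_neg at hK
  have h0 : deriv f x = 0 := hmax.deriv_eq_zero
  have hslope : Tendsto (slope (deriv f) x) (nhdsWithin x {x}ᶜ) (nhds (deriv (deriv f) x)) :=
    (hasDerivAt_iff_tendsto_slope.mp hf'.hasDerivAt)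
  have hev : ∀ᶠ y in nhdsWithin x {x}ᶜ, 0 < slope (deriv f) x y :=
    hslope.eventually (eventually_gt_nhds hK)
  have hev' : ∀ᶠ y in nhdsWithin x (Ioi x), 0 < deriv f y := by
    filter_upwards [nhdsWithin_mono x (fun y (hy : y ∈ Ioi x) => ne_of_gt hy : Ioi x ⊆ {x}ᶜ) hev,
      self_mem_nhdsWithin] with y hy hy'
    have hyx : 0 < y - x := sub_pos.mpr hy'
    rw [slope_def_field, h0, sub_zero] at hy
    rcases div_pos_iff.mp hy with ⟨h1, _⟩ | ⟨_, h2⟩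
    · exact h1
    · linarith
  obtain ⟨u, hu, hIoo⟩ := mem_nhdsGT_iff_exists_Ioo_subset.mp hev'
  obtain ⟨ε, hε, hball⟩ := Metric.eventually_nhds_iff.mp
    (hf.and (hmax : ∀ᶠ y in nhds x, f y ≤ f x))
  set b : ℝ := min u (x + ε / 2) with hb
  have hxb : x < b := lt_min hu (by linarith)
  have hsub : Ioo x b ⊆ Ioo x u := Ioo_subset_Ioo le_rfl (min_le_left _ _)
  have hballmem : ∀ y ∈ Icc x b, DifferentiableAt ℝ f y ∧ f y ≤ f x := by
    intro y hy
    apply hball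
    have h1 : y - x < ε := by
      have h2 := hy.2
      have : y ≤ x + ε / 2 := le_trans h2 (min_le_right _ _)
      linarith
    rw [Real.dist_eq, abs_lt]
    constructor <;> [linarith [hy.1]; linarith]
  have hcont : ContinuousOn f (Icc x b) := fun y hy =>
    ((hballmem y hy).1.continuousAt).continuousWithinAt
  have hmono : StrictMonoOn f (Icc x b) := by
    apply strictMonoOn_of_deriv_pos (convex_Icc x b) hcont
    intro y hy
    rw [interior_Icc] at hy
    exact hIoo (hsub hy)
  have hbmem : b ∈ Icc x b := ⟨le_of_lt hxb, le_rfl⟩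
  have h5 := hmono (left_mem_Icc.mpr hxb.le) hbmem hxb
  have h6 := (hballmem b hbmem).2
  linarith

lemma curveT_aux (y₀ : ℝ) (s : ℝ) : HasDerivAt (fun u : ℝ => (u, y₀)) ((1 : ℝ), (0 : ℝ)) s :=
  (hasDerivAt_id s).prodMk (hasDerivAt_const s y₀)

lemma curveX_aux (x₀ : ℝ) (s : ℝ) : HasDerivAt (fun u : ℝ => (x₀, u)) ((0 : ℝ), (1 : ℝ)) s :=
  (hasDerivAt_const s x₀).prodMk (hasDerivAt_id s)

lemma sliceT_aux {R : Set (ℝ × ℝ)} (hRo : IsOpen R) {G : ℝ × ℝ → ℝ} {z₀ : ℝ × ℝ} (hz : z₀ ∈ R)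
    (hC : ContDiffOn ℝ 2 G R) :
    (∀ᶠ s in nhds z₀.1, DifferentiableAt ℝ (fun u => G (u, z₀.2)) s) ∧
      DifferentiableAt ℝ (deriv (fun u => G (u, z₀.2))) z₀.1 := by
  have hten : Tendsto (fun s : ℝ => (s, z₀.2)) (nhds z₀.1) (nhds z₀) := by
    have h : Continuous (fun s : ℝ => (s, z₀.2)) := by continuity
    simpa using h.tendsto z₀.1
  have hmem : ∀ᶠ s in nhds z₀.1, (s, z₀.2) ∈ R := hten.eventually (hRo.mem_nhds hz)
  have hGdiff : ∀ᶠ s in nhds z₀.1, DifferentiableAt ℝ G (s, z₀.2) := by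
    filter_upwards [hmem] with s hs
    exact ((hC.differentiableOn (by norm_num)) _ hs).differentiableAt (hRo.mem_nhds hs)
  have h1 : ∀ᶠ s in nhds z₀.1, DifferentiableAt ℝ (fun u => G (u, z₀.2)) s := by
    filter_upwards [hGdiff] with s hs
    exact (hs.hasFDerivAt.comp_hasDerivAt s (curveT_aux z₀.2 s)).differentiableAt
  refine ⟨h1, ?_⟩
  have heq : deriv (fun u => G (u, z₀.2)) =ᶠ[nhds z₀.1]
      fun s => (fderiv ℝ G (s, z₀.2)) (1, 0) := by
    filter_upwards [hGdiff] with s hs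
    exact (hs.hasFDerivAt.comp_hasDerivAt s (curveT_aux z₀.2 s)).deriv
  have hfd : DifferentiableAt ℝ (fderiv ℝ G) z₀ :=
    ((hC.contDiffAt (hRo.mem_nhds hz)).fderiv_right (m := 1)
      (by norm_num)).differentiableAt (by norm_num)
  have hφ : DifferentiableAt ℝ (fun s => (fderiv ℝ G (s, z₀.2)) (1, 0)) z₀.1 := by
    apply DifferentiableAt.clm_apply _ (differentiableAt_const _)
    have := hfd.comp z₀.1 (curveT_aux z₀.2 z₀.1).differentiableAt
    exact this
  exact hφ.congr_of_eventuallyEq heq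

lemma sliceX_aux {R : Set (ℝ × ℝ)} (hRo : IsOpen R) {G : ℝ × ℝ → ℝ} {z₀ : ℝ × ℝ} (hz : z₀ ∈ R)
    (hC : ContDiffOn ℝ 2 G R) :
    (∀ᶠ s in nhds z₀.2, DifferentiableAt ℝ (fun u => G (z₀.1, u)) s) ∧
      DifferentiableAt ℝ (deriv (fun u => G (z₀.1, u))) z₀.2 := by
  have hten : Tendsto (fun s : ℝ => (z₀.1, s)) (nhds z₀.2) (nhds z₀) := by
    have h : Continuous (fun s : ℝ => (z₀.1, s)) := by continuity
    simpa using h.tendsto z₀.2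
  have hmem : ∀ᶠ s in nhds z₀.2, (z₀.1, s) ∈ R := hten.eventually (hRo.mem_nhds hz)
  have hGdiff : ∀ᶠ s in nhds z₀.2, DifferentiableAt ℝ G (z₀.1, s) := by
    filter_upwards [hmem] with s hs
    exact ((hC.differentiableOn (by norm_num)) _ hs).differentiableAt (hRo.mem_nhds hs)
  have h1 : ∀ᶠ s in nhds z₀.2, DifferentiableAt ℝ (fun u => G (z₀.1, u)) s := by
    filter_upwards [hGdiff] with s hs
    exact (hs.hasFDerivAt.comp_hasDerivAt s (curveX_aux z₀.1 s)).differentiableAt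
  refine ⟨h1, ?_⟩
  have heq : deriv (fun u => G (z₀.1, u)) =ᶠ[nhds z₀.2]
      fun s => (fderiv ℝ G (z₀.1, s)) (0, 1) := by
    filter_upwards [hGdiff] with s hs
    exact (hs.hasFDerivAt.comp_hasDerivAt s (curveX_aux z₀.1 s)).deriv
  have hfd : DifferentiableAt ℝ (fderiv ℝ G) z₀ :=
    ((hC.contDiffAt (hRo.mem_nhds hz)).fderiv_right (m := 1)
      (by norm_num)).differentiableAt (by norm_num)
  have hφ : DifferentiableAt ℝ (fun s => (fderiv ℝ G (z₀.1, s)) (0, 1)) z₀.2 := by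
    apply DifferentiableAt.clm_apply _ (differentiableAt_const _)
    have := hfd.comp z₀.2 (curveX_aux z₀.1 z₀.2).differentiableAt
    exact this
  exact hφ.congr_of_eventuallyEq heq

lemma noMax_aux {R : Set (ℝ × ℝ)} (hRo : IsOpen R) {F₁ F₂ : ℝ × ℝ → ℝ}
    (hC1 : ContDiffOn ℝ 2 F₁ R) (hC2 : ContDiffOn ℝ 2 F₂ R)
    (hE1 : SatisfiesE F₁ R) (hE2 : SatisfiesE F₂ R) {z₀ : ℝ × ℝ} (hz : z₀ ∈ R)
    {δ : ℝ} (hδ : 0 < δ) :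
    ¬ IsLocalMax (fun w => F₁ w - F₂ w + δ * Real.exp w.1) z₀ := by
  intro hmax
  set g₁ : ℝ → ℝ := fun s => F₁ (s, z₀.2) with hg₁
  set g₂ : ℝ → ℝ := fun s => F₂ (s, z₀.2) with hg₂
  set h₁ : ℝ → ℝ := fun s => F₁ (z₀.1, s) with hh₁
  set h₂ : ℝ → ℝ := fun s => F₂ (z₀.1, s) with hh₂
  obtain ⟨hg1d, hg1dd⟩ := sliceT_aux hRo hz hC1
  obtain ⟨hg2d, hg2dd⟩ := sliceT_aux hRo hz hC2
  obtain ⟨hh1d, hh1dd⟩ := sliceX_aux hRo hz hC1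
  obtain ⟨hh2d, hh2dd⟩ := sliceX_aux hRo hz hC2
  have htenT : Tendsto (fun s : ℝ => (s, z₀.2)) (nhds z₀.1) (nhds z₀) := by
    have h : Continuous (fun s : ℝ => (s, z₀.2)) := by continuity
    simpa using h.tendsto z₀.1
  have htenX : Tendsto (fun s : ℝ => (z₀.1, s)) (nhds z₀.2) (nhds z₀) := by
    have h : Continuous (fun s : ℝ => (z₀.1, s)) := by continuity
    simpa using h.tendsto z₀.2
  have hgmax : IsLocalMax (fun s => g₁ s - g₂ s + δ * Real.exp s) z₀.1 := by
    have := htenT.eventually hmax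
    simpa [IsLocalMax, IsMaxFilter, hg₁, hg₂] using this
  have hhmax : IsLocalMax (fun s => h₁ s - h₂ s + δ * Real.exp z₀.1) z₀.2 := by
    have := htenX.eventually hmax
    simpa [IsLocalMax, IsMaxFilter, hh₁, hh₂] using this
  have hgd : ∀ᶠ s in nhds z₀.1,
      DifferentiableAt ℝ (fun s => g₁ s - g₂ s + δ * Real.exp s) s := by
    filter_upwards [hg1d, hg2d] with s h1 h2
    exact (h1.sub h2).add ((Real.differentiable_exp.differentiableAt).const_mul δ)
  have hgderiv : deriv (fun s => g₁ s - g₂ s + δ * Real.exp s) =ᶠ[nhds z₀.1]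
      fun s => deriv g₁ s - deriv g₂ s + δ * Real.exp s := by
    filter_upwards [hg1d, hg2d] with s h1 h2
    exact ((h1.hasDerivAt.sub h2.hasDerivAt).add ((Real.hasDerivAt_exp s).const_mul δ)).deriv
  have hψd : DifferentiableAt ℝ (fun s => deriv g₁ s - deriv g₂ s + δ * Real.exp s) z₀.1 :=
    (hg1dd.sub hg2dd).add ((Real.differentiable_exp.differentiableAt).const_mul δ)
  have hgdd : DifferentiableAt ℝ (deriv (fun s => g₁ s - g₂ s + δ * Real.exp s)) z₀.1 :=
    hψd.congr_of_eventuallyEq hgderiv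
  have hgsdt := sdt_aux hgmax hgd hgdd
  have hgval : deriv (deriv (fun s => g₁ s - g₂ s + δ * Real.exp s)) z₀.1
      = deriv (deriv g₁) z₀.1 - deriv (deriv g₂) z₀.1 + δ * Real.exp z₀.1 := by
    rw [hgderiv.deriv_eq]
    exact ((hg1dd.hasDerivAt.sub hg2dd.hasDerivAt).add
      ((Real.hasDerivAt_exp z₀.1).const_mul δ)).deriv
  have hhd : ∀ᶠ s in nhds z₀.2,
      DifferentiableAt ℝ (fun s => h₁ s - h₂ s + δ * Real.exp z₀.1) s := by
    filter_upwards [hh1d, hh2d] with s h1 h2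
    exact (h1.sub h2).add_const _
  have hhderiv : deriv (fun s => h₁ s - h₂ s + δ * Real.exp z₀.1) =ᶠ[nhds z₀.2]
      fun s => deriv h₁ s - deriv h₂ s := by
    filter_upwards [hh1d, hh2d] with s h1 h2
    exact ((h1.hasDerivAt.sub h2.hasDerivAt).add_const _).deriv
  have hψ'd : DifferentiableAt ℝ (fun s => deriv h₁ s - deriv h₂ s) z₀.2 := hh1dd.sub hh2dd
  have hhdd : DifferentiableAt ℝ (deriv (fun s => h₁ s - h₂ s + δ * Real.exp z₀.1)) z₀.2 :=
    hψ'd.congr_of_eventuallyEq hhderiv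
  have hhsdt := sdt_aux hhmax hhd hhdd
  have hhval : deriv (deriv (fun s => h₁ s - h₂ s + δ * Real.exp z₀.1)) z₀.2
      = deriv (deriv h₁) z₀.2 - deriv (deriv h₂) z₀.2 := by
    rw [hhderiv.deriv_eq]
    exact (hh1dd.hasDerivAt.sub hh2dd.hasDerivAt).deriv
  have hh0 : deriv h₁ z₀.2 - deriv h₂ z₀.2 = 0 := by
    have := hhmax.deriv_eq_zero
    rwa [hhderiv.self_of_nhds] at this
  have idT1 : pdT (pdT F₁) z₀ = deriv (deriv g₁) z₀.1 := rfl
  have idT2 : pdT (pdT F₂) z₀ = deriv (deriv g₂) z₀.1 := rfl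
  have idX1 : pdX (pdX F₁) z₀ = deriv (deriv h₁) z₀.2 := rfl
  have idX2 : pdX (pdX F₂) z₀ = deriv (deriv h₂) z₀.2 := rfl
  have idx1 : pdX F₁ z₀ = deriv h₁ z₀.2 := rfl
  have idx2 : pdX F₂ z₀ = deriv h₂ z₀.2 := rfl
  obtain ⟨hne1, heq1⟩ := hE1 z₀ hz
  obtain ⟨hne2, heq2⟩ := hE2 z₀ hz
  have hcc : pdX F₂ z₀ = pdX F₁ z₀ := by rw [idx1, idx2]; linarith
  set c := pdX F₁ z₀ with hc
  have hk : (0:ℝ) < π ^ 2 * (c ^ 4)⁻¹ := by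
    have : c ≠ 0 := hne1
    positivity
  rw [hcc] at heq2
  rw [hgval] at hgsdt
  rw [hhval] at hhsdt
  rw [idT1, idX1] at heq1
  rw [idT2, idX2] at heq2
  have hE21 : deriv (deriv h₂) z₀.2 - deriv (deriv h₁) z₀.2 ≥ 0 := by linarith
  have hkE : 0 ≤ π ^ 2 * (c ^ 4)⁻¹ * (deriv (deriv h₂) z₀.2 - deriv (deriv h₁) z₀.2) :=
    mul_nonneg hk.le hE21
  have hexp : 0 < δ * Real.exp z₀.1 := mul_pos hδ (Real.exp_pos _)
  nlinarith [hkE, hexp, hgsdt, heq1, heq2]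

lemma compare_aux {R : Set (ℝ × ℝ)} (hRo : IsOpen R) (hRb : Bornology.IsBounded R)
    {F₁ F₂ : ℝ × ℝ → ℝ} (h1c : ContinuousOn F₁ (closure R)) (h2c : ContinuousOn F₂ (closure R))
    (hC1 : ContDiffOn ℝ 2 F₁ R) (hC2 : ContDiffOn ℝ 2 F₂ R)
    (hE1 : SatisfiesE F₁ R) (hE2 : SatisfiesE F₂ R) {b : ℝ}
    (hb : ∀ w ∈ frontier R, F₁ w - F₂ w ≤ b) : ∀ z ∈ R, F₁ z - F₂ z ≤ b := by
  intro z hzR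
  have hcc : IsCompact (closure R) := hRb.isCompact_closure
  have hne : (closure R).Nonempty := ⟨z, subset_closure hzR⟩
  have hexpc : ContinuousOn (fun w : ℝ × ℝ => Real.exp w.1) (closure R) :=
    (Real.continuous_exp.comp continuous_fst).continuousOn
  obtain ⟨w₀, hw₀, hw₀max⟩ := hcc.exists_isMaxOn hne hexpc
  set M := Real.exp w₀.1 with hM
  have hM0 : 0 < M := Real.exp_pos _
  have key : ∀ δ : ℝ, 0 < δ → F₁ z - F₂ z + δ * Real.exp z.1 ≤ b + δ * M := by
    intro δ hδ
    set v := fun w : ℝ × ℝ => F₁ w - F₂ w + δ * Real.exp w.1 with hv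
    have hvc : ContinuousOn v (closure R) :=
      (h1c.sub h2c).add (continuousOn_const.mul hexpc)
    obtain ⟨z₀, hz₀, hmax⟩ := hcc.exists_isMaxOn hne hvc
    by_cases hz₀R : z₀ ∈ R
    · exact absurd (hmax.isLocalMax (mem_of_superset (hRo.mem_nhds hz₀R) subset_closure))
        (noMax_aux hRo hC1 hC2 hE1 hE2 hz₀R hδ)
    · have hfr : z₀ ∈ frontier R := by
        rw [hRo.frontier_eq]; exact ⟨hz₀, hz₀R⟩
      have h1 : v z ≤ v z₀ := hmax (subset_closure hzR)
      have h2 := hb z₀ hfr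
      have h3 : Real.exp z₀.1 ≤ M := hw₀max hz₀
      have h4 : δ * Real.exp z₀.1 ≤ δ * M := mul_le_mul_of_nonneg_left h3 hδ.le
      simp only [hv] at h1
      linarith
  apply le_of_forall_pos_le_add
  intro ε hε
  have hδ : 0 < ε / M := div_pos hε hM0
  have hkey := key (ε / M) hδ
  have hz1 : 0 < (ε / M) * Real.exp z.1 := mul_pos hδ (Real.exp_pos _)
  have hMM : (ε / M) * M = ε := div_mul_cancel₀ ε hM0.ne'
  linarith

lemma boundOne_aux {R : Set (ℝ × ℝ)} (hRo : IsOpen R) (hRb : Bornology.IsBounded R)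
    {F : ℝ × ℝ → ℝ} (hc : ContinuousOn F (closure R)) (hne : ∀ z ∈ R, pdX F z ≠ 0)
    {b : ℝ} (hb : ∀ w ∈ frontier R, F w ≤ b) : ∀ z ∈ R, F z ≤ b := by
  intro z hzR
  have hcc : IsCompact (closure R) := hRb.isCompact_closure
  have hnecl : (closure R).Nonempty := ⟨z, subset_closure hzR⟩
  obtain ⟨z₀, hz₀, hmax⟩ := hcc.exists_isMaxOn hnecl hc
  by_cases hz₀R : z₀ ∈ R
  · exfalso
    have hlmax : IsLocalMax F z₀ :=
      hmax.isLocalMax (mem_of_superset (hRo.mem_nhds hz₀R) subset_closure)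
    have htenX : Tendsto (fun s : ℝ => (z₀.1, s)) (nhds z₀.2) (nhds z₀) := by
      have h : Continuous (fun s : ℝ => (z₀.1, s)) := by continuity
      simpa using h.tendsto z₀.2
    have hsl : IsLocalMax (fun s => F (z₀.1, s)) z₀.2 := by
      have := htenX.eventually hlmax
      simpa [IsLocalMax, IsMaxFilter] using this
    exact hne z₀ hz₀R hsl.deriv_eq_zero
  · have hfr : z₀ ∈ frontier R := by rw [hRo.frontier_eq]; exact ⟨hz₀, hz₀R⟩
    exact le_trans (hmax (subset_closure hzR)) (hb z₀ hfr)

lemma frontier_nonempty_aux {R : Set (ℝ × ℝ)} (hRb : Bornology.IsBounded R)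
    (hne : R.Nonempty) : (frontier R).Nonempty := by
  rw [nonempty_iff_ne_empty]
  intro h
  have hclopen : IsClopen R := isClopen_iff_frontier_eq_empty.mpr h
  rcases isClopen_iff.mp hclopen with h' | h'
  · exact absurd h' (nonempty_iff_ne_empty.mp hne)
  · rw [h'] at hRb
    obtain ⟨C, hC⟩ := Metric.isBounded_iff.mp hRb
    have := hC (mem_univ ((0:ℝ), (0:ℝ))) (mem_univ ((|C| + 1, 0) : ℝ × ℝ))
    rw [Prod.dist_eq] at this
    simp [Real.dist_eq] at this
    have h2 := neg_le_abs (-1 + -|C| : ℝ)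
    have h3 := le_abs_self C
    linarith

lemma pdX_neg_aux (F : ℝ × ℝ → ℝ) (z : ℝ × ℝ) : pdX (fun w => -F w) z = -pdX F z := by
  simp only [pdX]
  exact deriv.neg

theorem statement5 (R : Set (ℝ × ℝ)) (hRo : IsOpen R) (hRb : Bornology.IsBounded R)
    (F₁ F₂ F : ℝ × ℝ → ℝ)
    (hA1 : Adm F₁ R) (hA2 : Adm F₂ R) (hA : Adm F R)
    (hC1 : ContDiffOn ℝ 2 F₁ R) (hC2 : ContDiffOn ℝ 2 F₂ R) (hC : ContDiffOn ℝ 2 F R)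
    (hE1 : SatisfiesE F₁ R) (hE2 : SatisfiesE F₂ R) (hE : SatisfiesE F R) :
    ((∀ z ∈ frontier R, F₁ z ≤ F₂ z) → ∀ z ∈ R, F₁ z ≤ F₂ z) ∧
    (∀ z ∈ R, |F₁ z - F₂ z| ≤ sSup ((fun w => |F₁ w - F₂ w|) '' frontier R)) ∧
    sSup ((fun w => |F w|) '' R) = sSup ((fun w => |F w|) '' frontier R) := by
  have h1c := hA1.1
  have h2c := hA2.1
  have hFc := hA.1
  have hcc : IsCompact (closure R) := hRb.isCompact_closure
  have hfrsub : frontier R ⊆ closure R := fun x hx => frontier_subset_closure hx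
  have hKfr : IsCompact (frontier R) := hcc.of_isClosed_subset isClosed_frontier hfrsub
  refine ⟨?_, ?_, ?_⟩
  · -- part 1
    intro hbd z hz
    have hb : ∀ w ∈ frontier R, F₁ w - F₂ w ≤ 0 := fun w hw => sub_nonpos.mpr (hbd w hw)
    have := compare_aux hRo hRb h1c h2c hC1 hC2 hE1 hE2 hb z hz
    linarith
  · -- part 2
    intro z hz
    set S := sSup ((fun w => |F₁ w - F₂ w|) '' frontier R) with hS
    have hbdd : BddAbove ((fun w => |F₁ w - F₂ w|) '' frontier R) :=
      hKfr.bddAbove_image (((h1c.sub h2c).mono hfrsub).abs)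
    have hb1 : ∀ w ∈ frontier R, F₁ w - F₂ w ≤ S := fun w hw =>
      (le_abs_self _).trans (le_csSup hbdd ⟨w, hw, rfl⟩)
    have hb2 : ∀ w ∈ frontier R, F₂ w - F₁ w ≤ S := by
      intro w hw
      have h := (le_abs_self (F₂ w - F₁ w)).trans_eq (abs_sub_comm _ _)
      exact h.trans (le_csSup hbdd ⟨w, hw, rfl⟩)
    have hu := compare_aux hRo hRb h1c h2c hC1 hC2 hE1 hE2 hb1 z hz
    have hl := compare_aux hRo hRb h2c h1c hC2 hC1 hE2 hE1 hb2 z hz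
    exact abs_le.mpr ⟨by linarith, hu⟩
  · -- part 3
    rcases eq_empty_or_nonempty R with hR | hR
    · have hfr : frontier R = ∅ := by rw [hR]; exact frontier_empty
      rw [hfr, hR]
    · set S' := sSup ((fun w => |F w|) '' frontier R) with hS'
      have habs : ContinuousOn (fun w => |F w|) (closure R) := hFc.abs
      have hbddR : BddAbove ((fun w => |F w|) '' R) :=
        (hcc.bddAbove_image habs).mono (image_mono subset_closure)
      have hbddF : BddAbove ((fun w => |F w|) '' frontier R) :=
        hKfr.bddAbove_image (habs.mono hfrsub)
      have hub : ∀ z ∈ R, |F z| ≤ S' := by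
        intro z hz
        have hb1 : ∀ w ∈ frontier R, F w ≤ S' := fun w hw =>
          (le_abs_self _).trans (le_csSup hbddF ⟨w, hw, rfl⟩)
        have hb2 : ∀ w ∈ frontier R, -F w ≤ S' := fun w hw =>
          (neg_le_abs _).trans (le_csSup hbddF ⟨w, hw, rfl⟩)
        have h1 := boundOne_aux hRo hRb hFc (fun z hz => (hE z hz).1) hb1 z hz
        have h2 := boundOne_aux hRo hRb hFc.neg
          (fun z hz => by show pdX (fun w => -F w) z ≠ 0; rw [pdX_neg_aux]; exact neg_ne_zero.mpr (hE z hz).1) hb2 z hz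
        exact abs_le.mpr ⟨by linarith [show -F z ≤ S' from h2], h1⟩
      have le1 : sSup ((fun w => |F w|) '' R) ≤ S' := by
        apply csSup_le (hR.image _)
        rintro u ⟨w, hw, rfl⟩
        exact hub w hw
      have le2 : S' ≤ sSup ((fun w => |F w|) '' R) := by
        apply csSup_le ((frontier_nonempty_aux hRb hR).image _)
        rintro u ⟨w, hw, rfl⟩
        obtain ⟨x, hxn, hx⟩ := mem_closure_iff_seq_limit.mp (hfrsub hw)
        have hT : ∀ n, |F (x n)| ≤ sSup ((fun w => |F w|) '' R) := fun n =>
          le_csSup hbddR ⟨x n, hxn n, rfl⟩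
        have htd : Tendsto (fun n => |F (x n)|) atTop (nhds |F w|) := by
          have hcw : ContinuousWithinAt (fun w => |F w|) (closure R) w := habs w (hfrsub hw)
          exact hcw.tendsto.comp (tendsto_nhdsWithin_of_tendsto_nhds_of_eventually_within x hx
            (Eventually.of_forall fun n => subset_closure (hxn n)))
        exact le_of_tendsto htd (Eventually.of_forall hT)
      linarith
end
end

section
/- For any reals ε, r ∈ (0, 1/4) and B > 1, there exists a constant c > 0, depending only on (ε, r, B), such that the following holds. Let L > 0 be a real number and set R = (0, 1/L)×(−1, 1) ⊂ ℝ². Let F₁, F₂ ∈ Adm_ε(R) ∩ C⁵(closure(R)) satisfy equation (E) on R with ‖F_i‖_{C⁵(R)} ≤ B for each i ∈ {1,2}. If F₁(t,x) = F₂(t,x) for every (t,x) ∈ ∂R with t ∈ {0, 1/L}, then |F₁(t,x) − F₂(t,x)| ≤ c⁻¹·exp(−c·L^{1/8}) for every (t,x) ∈ [0, 1/L]×[r−1, 1−r]. -/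
open Real Set MeasureTheory Filter
open scoped ENNReal

noncomputable section

/-- The rectangle `(0, 1/L) × (−1, 1)`. -/
def rect9 (L : ℝ) : Set (ℝ × ℝ) := Ioo (0 : ℝ) L⁻¹ ×ˢ Ioo (-1 : ℝ) 1

open Topology

/-! ### helper lemmas -/

lemma pdIter_zero_zero (F : ℝ × ℝ → ℝ) : pdIter F 0 0 = F := by simp [pdIter]
lemma pdIter_one_zero (F : ℝ × ℝ → ℝ) : pdIter F 1 0 = pdT F := by simp [pdIter]
lemma pdIter_zero_two (F : ℝ × ℝ → ℝ) : pdIter F 0 2 = pdX (pdX F) := by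
  simp [pdIter, Function.iterate_succ, Function.iterate_zero]

lemma cm_bound {F : ℝ × ℝ → ℝ} {R : Set (ℝ × ℝ)} {B : ℝ} (hB : 0 ≤ B)
    (h : CmNorm 5 F R ≤ ENNReal.ofReal B) {i j : ℕ} (hij : i + j ≤ 5) :
    ∀ z ∈ R, |pdIter F i j z| ≤ B := by
  intro z hz
  have h1 : ENNReal.ofReal |pdIter F i j z| ≤ CmNorm 5 F R := by
    have e1 : ENNReal.ofReal |pdIter F i j z| ≤
        ⨆ z ∈ R, ENNReal.ofReal |pdIter F i ((i + j) - i) z| := by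
      simp only [Nat.add_sub_cancel_left]
      exact le_iSup₂ (f := fun z (_ : z ∈ R) => ENNReal.ofReal |pdIter F i j z|) z hz
    have e2 : (⨆ z ∈ R, ENNReal.ofReal |pdIter F i ((i + j) - i) z|) ≤
        ⨆ i' ∈ Finset.range ((i + j) + 1), ⨆ z ∈ R,
          ENNReal.ofReal |pdIter F i' ((i + j) - i') z| :=
      le_iSup₂ (f := fun i' (_ : i' ∈ Finset.range ((i + j) + 1)) =>
        ⨆ z ∈ R, ENNReal.ofReal |pdIter F i' ((i + j) - i') z|) i
        (Finset.mem_range.mpr (by omega))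
    refine (e1.trans e2).trans ?_
    exact Finset.single_le_sum (f := fun j' => ⨆ i' ∈ Finset.range (j' + 1),
      ⨆ z ∈ R, ENNReal.ofReal |pdIter F i' (j' - i') z|)
      (fun _ _ => zero_le) (Finset.mem_range.mpr (by omega))
  have := h1.trans h
  rwa [ENNReal.ofReal_le_ofReal_iff hB] at this

lemma sin_lb {s : ℝ} (h0 : 0 ≤ s) (h1 : s ≤ 1) : 2 * min s (1 - s) ≤ Real.sin (π * s) := by
  rcases le_total s (1/2) with hs | hs
  · have hmin : min s (1-s) = s := min_eq_left (by linarith)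
    rw [hmin]
    have := Real.mul_le_sin (x := π * s) (by positivity) (by nlinarith [Real.pi_pos])
    have hpi : (2/π) * (π * s) = 2 * s := by
      have := Real.pi_ne_zero; field_simp
    linarith [hpi ▸ this]
  · have hmin : min s (1-s) = 1 - s := min_eq_right (by linarith)
    rw [hmin]
    have h2 : Real.sin (π * s) = Real.sin (π * (1 - s)) := by
      rw [show π * (1 - s) = π - π * s by ring, Real.sin_pi_sub]
    rw [h2]
    have := Real.mul_le_sin (x := π * (1-s)) (by nlinarith [Real.pi_pos])
      (by nlinarith [Real.pi_pos])
    have hpi : (2/π) * (π * (1-s)) = 2 * (1-s) := by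
      have := Real.pi_ne_zero; field_simp
    linarith [hpi ▸ this]

lemma abs_sinh_le_cosh (x : ℝ) : |Real.sinh x| ≤ Real.cosh x := by
  rw [Real.sinh_eq, Real.cosh_eq, abs_div, abs_two]
  gcongr
  exact (abs_sub _ _).trans (by rw [abs_of_pos (Real.exp_pos _), abs_of_pos (Real.exp_pos _)])

lemma cosh_ratio_le {y d : ℝ} (hy : 0 ≤ y) (hd : 0 ≤ d) :
    Real.cosh y ≤ 2 * Real.exp (-d) * Real.cosh (y + d) := by
  have h1 : Real.cosh y ≤ Real.exp y := by
    rw [Real.cosh_eq]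
    nlinarith [Real.exp_le_exp.mpr (neg_le_self hy), Real.exp_pos (-y), Real.exp_pos y]
  have h2 : Real.exp (y + d) / 2 ≤ Real.cosh (y + d) := by
    rw [Real.cosh_eq]; nlinarith [Real.exp_pos (-(y+d))]
  have := Real.exp_pos (y + d)
  calc Real.cosh y ≤ Real.exp y := h1
    _ = 2 * Real.exp (-d) * (Real.exp (y + d) / 2) := by
        rw [show 2 * Real.exp (-d) * (Real.exp (y + d) / 2)
            = Real.exp (-d) * Real.exp (y + d) by ring, ← Real.exp_add]
        ring_nf
    _ ≤ 2 * Real.exp (-d) * Real.cosh (y + d) := by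
        have := Real.exp_pos (-d); nlinarith

lemma deriv2_nonpos_of_isLocalMax {f : ℝ → ℝ} {U : Set ℝ} {t₀ : ℝ}
    (hU : IsOpen U) (ht₀ : t₀ ∈ U) (hf : ContDiffOn ℝ 2 f U) (hmax : IsLocalMax f t₀) :
    deriv (deriv f) t₀ ≤ 0 := by
  by_contra hpos
  push_neg at hpos
  have h2 : DifferentiableOn ℝ f U ∧ _ ∧ ContDiffOn ℝ 1 (deriv f) U :=
    (contDiffOn_succ_iff_deriv_of_isOpen (n := 1) hU).mp hf
  have h1 : DifferentiableOn ℝ (deriv f) U ∧ _ ∧ ContDiffOn ℝ 0 (deriv (deriv f)) U :=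
    (contDiffOn_succ_iff_deriv_of_isOpen (n := 0) hU).mp h2.2.2
  have hc : ContinuousAt (deriv (deriv f)) t₀ :=
    (h1.2.2.continuousOn.continuousAt (hU.mem_nhds ht₀))
  have hev : ∀ᶠ s in 𝓝 t₀, 0 < deriv (deriv f) s := hc.eventually (eventually_gt_nhds hpos)
  obtain ⟨δ, hδ, hball⟩ := Metric.eventually_nhds_iff_ball.mp
    (hev.and ((hU.eventually_mem ht₀).and hmax))
  have hsub : Icc t₀ (t₀ + δ/2) ⊆ Metric.ball t₀ δ := by
    intro x hx
    rw [Metric.mem_ball, Real.dist_eq, abs_lt]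
    constructor <;> [linarith [hx.1]; linarith [hx.2]]
  have hmono : StrictMonoOn (deriv f) (Icc t₀ (t₀ + δ/2)) := by
    apply strictMonoOn_of_deriv_pos (convex_Icc _ _)
    · exact (h1.1.continuousOn).mono fun x hx => (hball x (hsub hx)).2.1
    · intro x hx
      rw [interior_Icc] at hx
      exact (hball x (hsub (Ioo_subset_Icc_self hx))).1
  have hd0 : deriv f t₀ = 0 := hmax.deriv_eq_zero
  have hfmono : StrictMonoOn f (Icc t₀ (t₀ + δ/2)) := by
    apply strictMonoOn_of_deriv_pos (convex_Icc _ _)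
    · exact (h2.1.continuousOn).mono fun x hx => (hball x (hsub hx)).2.1
    · intro x hx
      rw [interior_Icc] at hx
      have := hmono (left_mem_Icc.mpr (by linarith)) (Ioo_subset_Icc_self hx) hx.1
      rwa [hd0] at this
  have hlt : f t₀ < f (t₀ + δ/2) :=
    hfmono (left_mem_Icc.mpr (by linarith)) (right_mem_Icc.mpr (by linarith)) (by linarith)
  have hle : f (t₀ + δ/2) ≤ f t₀ :=
    (hball _ (hsub (right_mem_Icc.mpr (by linarith)))).2.2
  linarith

lemma closure_rect9 {L : ℝ} (hL : 0 < L) :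
    closure (rect9 L) = Icc (0:ℝ) L⁻¹ ×ˢ Icc (-1:ℝ) 1 := by
  rw [rect9, closure_prod_eq, closure_Ioo (by positivity : (0:ℝ) < L⁻¹).ne,
    closure_Ioo (by norm_num : (-1:ℝ) < 1).ne]

lemma frontier_rect9 {L : ℝ} (hL : 0 < L) :
    frontier (rect9 L) = (Icc (0:ℝ) L⁻¹ ×ˢ Icc (-1:ℝ) 1) \ rect9 L := by
  have h : IsOpen (rect9 L) := (isOpen_Ioo).prod isOpen_Ioo
  rw [frontier, h.interior_eq, closure_rect9 hL]

lemma lineT_contDiff {L : ℝ} (hL : 0 < L) {F : ℝ×ℝ→ℝ}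
    (hF : ContDiffOn ℝ 5 F (closure (rect9 L))) {x₀ : ℝ} (hx : x₀ ∈ Icc (-1:ℝ) 1) :
    ContDiffOn ℝ 5 (fun s => F (s, x₀)) (Ioo 0 L⁻¹) := by
  have hline : ContDiffOn ℝ 5 (fun s : ℝ => (s, x₀)) (Ioo 0 L⁻¹) :=
    (contDiff_id.prodMk contDiff_const).contDiffOn
  exact hF.comp hline fun s hs => by
    rw [closure_rect9 hL]; exact ⟨Ioo_subset_Icc_self hs, hx⟩

lemma lineX_contDiff {L : ℝ} (hL : 0 < L) {F : ℝ×ℝ→ℝ}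
    (hF : ContDiffOn ℝ 5 F (closure (rect9 L))) {t₀ : ℝ} (ht : t₀ ∈ Icc (0:ℝ) L⁻¹) :
    ContDiffOn ℝ 5 (fun x => F (t₀, x)) (Ioo (-1:ℝ) 1) := by
  have hline : ContDiffOn ℝ 5 (fun x : ℝ => (t₀, x)) (Ioo (-1:ℝ) 1) :=
    (contDiff_const.prodMk contDiff_id).contDiffOn
  exact hF.comp hline fun x hx => by
    rw [closure_rect9 hL]; exact ⟨ht, Ioo_subset_Icc_self hx⟩

lemma oneD_facts {f : ℝ → ℝ} {U : Set ℝ} (hU : IsOpen U) (hf : ContDiffOn ℝ 5 f U) :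
    (∀ t ∈ U, DifferentiableAt ℝ f t) ∧ (∀ t ∈ U, DifferentiableAt ℝ (deriv f) t) := by
  have h5 := (contDiffOn_succ_iff_deriv_of_isOpen (n := 4) hU).mp hf
  have h4 := (contDiffOn_succ_iff_deriv_of_isOpen (n := 3) hU).mp h5.2.2
  exact ⟨fun t ht => (h5.1 t ht).differentiableAt (hU.mem_nhds ht),
    fun t ht => (h4.1 t ht).differentiableAt (hU.mem_nhds ht)⟩

lemma line_calc {f g w : ℝ → ℝ} {U : Set ℝ} (hU : IsOpen U) {t₀ : ℝ} (ht : t₀ ∈ U)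
    (hf : ContDiffOn ℝ 5 f U) (hg : ContDiffOn ℝ 5 g U)
    (hw1 : ∀ t, DifferentiableAt ℝ w t) (hw2 : ∀ t, DifferentiableAt ℝ (deriv w) t) :
    deriv (fun s => f s - g s - w s) t₀ = deriv f t₀ - deriv g t₀ - deriv w t₀ ∧
    deriv (deriv (fun s => f s - g s - w s)) t₀ =
      deriv (deriv f) t₀ - deriv (deriv g) t₀ - deriv (deriv w) t₀ := by
  obtain ⟨hf0, hf1⟩ := oneD_facts hU hf
  obtain ⟨hg0, hg1⟩ := oneD_facts hU hg
  have h1 : ∀ s ∈ U, deriv (fun s => f s - g s - w s) s = deriv f s - deriv g s - deriv w s := by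
    intro s hs
    rw [deriv_fun_sub ((hf0 s hs).fun_sub (hg0 s hs)) (hw1 s), deriv_fun_sub (hf0 s hs) (hg0 s hs)]
  refine ⟨h1 t₀ ht, ?_⟩
  have hev : (fun s => deriv (fun s => f s - g s - w s) s)
      =ᶠ[𝓝 t₀] fun s => deriv f s - deriv g s - deriv w s := by
    filter_upwards [hU.mem_nhds ht] with s hs using h1 s hs
  rw [Filter.EventuallyEq.deriv_eq hev,
    deriv_fun_sub ((hf1 t₀ ht).fun_sub (hg1 t₀ ht)) (hw2 t₀), deriv_fun_sub (hf1 t₀ ht) (hg1 t₀ ht)]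

/-! ### explicit derivatives of the barrier lines -/

lemma hasDerivAt_sinL (C c s : ℝ) :
    HasDerivAt (fun s : ℝ => C * Real.sin (c*s)) (C * c * Real.cos (c*s)) s := by
  have h : HasDerivAt (fun s : ℝ => c * s) c s := by
    simpa using (hasDerivAt_id s).const_mul c
  have := (((Real.hasDerivAt_sin (c*s)).comp s h).const_mul C :
    HasDerivAt (fun s : ℝ => C * Real.sin (c*s)) (C * (Real.cos (c*s) * c)) s)
  exact this.congr_deriv (by ring)

lemma hasDerivAt_cosL (C c s : ℝ) :
    HasDerivAt (fun s : ℝ => C * Real.cos (c*s)) (-(C * c * Real.sin (c*s))) s := by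
  have h : HasDerivAt (fun s : ℝ => c * s) c s := by
    simpa using (hasDerivAt_id s).const_mul c
  have := (((Real.hasDerivAt_cos (c*s)).comp s h).const_mul C :
    HasDerivAt (fun s : ℝ => C * Real.cos (c*s)) (C * (-Real.sin (c*s) * c)) s)
  exact this.congr_deriv (by ring)

lemma hasDerivAt_coshL (C c x : ℝ) :
    HasDerivAt (fun x : ℝ => C * Real.cosh (c*x)) (C * c * Real.sinh (c*x)) x := by
  have h : HasDerivAt (fun s : ℝ => c * s) c x := by
    simpa using (hasDerivAt_id x).const_mul c
  have := (((Real.hasDerivAt_cosh (c*x)).comp x h).const_mul C :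
    HasDerivAt (fun x : ℝ => C * Real.cosh (c*x)) (C * (Real.sinh (c*x) * c)) x)
  exact this.congr_deriv (by ring)

lemma hasDerivAt_sinhL (C c x : ℝ) :
    HasDerivAt (fun x : ℝ => C * Real.sinh (c*x)) (C * c * Real.cosh (c*x)) x := by
  have h : HasDerivAt (fun s : ℝ => c * s) c x := by
    simpa using (hasDerivAt_id x).const_mul c
  have := (((Real.hasDerivAt_sinh (c*x)).comp x h).const_mul C :
    HasDerivAt (fun x : ℝ => C * Real.sinh (c*x)) (C * (Real.cosh (c*x) * c)) x)
  exact this.congr_deriv (by ring)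

lemma deriv_sinL (C c : ℝ) :
    deriv (fun s : ℝ => C * Real.sin (c*s)) = fun s => (C * c) * Real.cos (c*s) :=
  funext fun s => by rw [(hasDerivAt_sinL C c s).deriv]

lemma deriv_coshL (C c : ℝ) :
    deriv (fun x : ℝ => C * Real.cosh (c*x)) = fun x => (C * c) * Real.sinh (c*x) :=
  funext fun x => by rw [(hasDerivAt_coshL C c x).deriv]

lemma deriv2_sinL (C c s : ℝ) :
    deriv (deriv (fun s : ℝ => C * Real.sin (c*s))) s = -(C * c^2 * Real.sin (c*s)) := by
  rw [deriv_sinL, (hasDerivAt_cosL (C*c) c s).deriv]; ring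

lemma deriv2_coshL (C c x : ℝ) :
    deriv (deriv (fun x : ℝ => C * Real.cosh (c*x))) x = C * c^2 * Real.cosh (c*x) := by
  rw [deriv_coshL, (hasDerivAt_sinhL (C*c) c x).deriv]; ring

lemma sinL_diffs (C c : ℝ) : (∀ t, DifferentiableAt ℝ (fun s : ℝ => C * Real.sin (c*s)) t) ∧
    (∀ t, DifferentiableAt ℝ (deriv (fun s : ℝ => C * Real.sin (c*s))) t) := by
  refine ⟨fun t => (hasDerivAt_sinL C c t).differentiableAt, fun t => ?_⟩
  rw [deriv_sinL]
  exact (hasDerivAt_cosL (C*c) c t).differentiableAt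

lemma coshL_diffs (C c : ℝ) : (∀ t, DifferentiableAt ℝ (fun x : ℝ => C * Real.cosh (c*x)) t) ∧
    (∀ t, DifferentiableAt ℝ (deriv (fun x : ℝ => C * Real.cosh (c*x))) t) := by
  refine ⟨fun t => (hasDerivAt_coshL C c t).differentiableAt, fun t => ?_⟩
  rw [deriv_coshL]
  exact (hasDerivAt_sinhL (C*c) c t).differentiableAt

lemma contDiff_sinL (C c : ℝ) : ContDiff ℝ 5 (fun s : ℝ => C * Real.sin (c*s)) :=
  contDiff_const.mul ((Real.contDiff_sin.of_le le_top).comp (contDiff_const.mul contDiff_id))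

lemma contDiff_coshL (C c : ℝ) : ContDiff ℝ 5 (fun x : ℝ => C * Real.cosh (c*x)) :=
  contDiff_const.mul ((Real.contDiff_cosh.of_le le_top).comp (contDiff_const.mul contDiff_id))

/-! ### sup bound on closure -/

lemma bound_on_closure {f : ℝ×ℝ→ℝ} {R : Set (ℝ×ℝ)} {B : ℝ}
    (hc : ContinuousOn f (closure R)) (h : ∀ z ∈ R, |f z| ≤ B) :
    ∀ z ∈ closure R, |f z| ≤ B := by
  intro z hz
  have hne : (𝓝[R] z).NeBot := mem_closure_iff_nhdsWithin_neBot.mp hz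
  have htend : Tendsto f (𝓝[R] z) (𝓝 (f z)) :=
    (hc z hz).mono_left (nhdsWithin_mono _ subset_closure)
  have : Tendsto (fun y => |f y|) (𝓝[R] z) (𝓝 |f z|) := htend.abs
  exact le_of_tendsto this (eventually_nhdsWithin_of_forall h)

/-! ### the constant γ -/

def gam (ε B : ℝ) : ℝ := min 1 (π^2/(π^2 * ε⁻¹^4 + 4*π^2*B*ε⁻¹^11 + 1))

lemma gam_pos {ε B : ℝ} (hε : 0 < ε) (hB : 0 < B) : 0 < gam ε B := by
  have h1 : (0:ℝ) < π^2 * ε⁻¹^4 + 4*π^2*B*ε⁻¹^11 + 1 := by positivity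
  have := Real.pi_pos
  exact lt_min one_pos (by positivity)

lemma gam_le_one (ε B : ℝ) : gam ε B ≤ 1 := min_le_left _ _

lemma gam_key {ε B : ℝ} (hε : 0 < ε) (hB : 0 < B) :
    π^2 * ε⁻¹^4 * (gam ε B)^2 + 4*π^2*B*ε⁻¹^11 * gam ε B < π^2 := by
  set g := gam ε B with hg
  have hg0 : 0 < g := gam_pos hε hB
  have hg1 : g ≤ 1 := gam_le_one ε B
  have hD : (0:ℝ) < π^2 * ε⁻¹^4 + 4*π^2*B*ε⁻¹^11 + 1 := by positivity
  have hg2 : g ≤ π^2/(π^2 * ε⁻¹^4 + 4*π^2*B*ε⁻¹^11 + 1) := min_le_right _ _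
  have hA : (0:ℝ) ≤ π^2 * ε⁻¹^4 := by positivity
  have hb : (0:ℝ) ≤ 4*π^2*B*ε⁻¹^11 := by positivity
  have step1 : π^2 * ε⁻¹^4 * g^2 + 4*π^2*B*ε⁻¹^11 * g
      ≤ (π^2 * ε⁻¹^4 + 4*π^2*B*ε⁻¹^11) * g := by
    have hgg : g^2 ≤ g := by nlinarith
    nlinarith [mul_le_mul_of_nonneg_left hgg hA]
  have step2 : (π^2 * ε⁻¹^4 + 4*π^2*B*ε⁻¹^11) * g < π^2 := by
    have h3 : (π^2 * ε⁻¹^4 + 4*π^2*B*ε⁻¹^11) * (π^2/(π^2 * ε⁻¹^4 + 4*π^2*B*ε⁻¹^11 + 1))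
        < π^2 := by
      rw [div_eq_inv_mul]
      have hpi := Real.pi_pos
      have : (π^2 * ε⁻¹^4 + 4*π^2*B*ε⁻¹^11) < π^2 * ε⁻¹^4 + 4*π^2*B*ε⁻¹^11 + 1 := by linarith
      calc (π^2 * ε⁻¹^4 + 4*π^2*B*ε⁻¹^11) * ((π^2 * ε⁻¹^4 + 4*π^2*B*ε⁻¹^11 + 1)⁻¹ * π^2)
          = ((π^2 * ε⁻¹^4 + 4*π^2*B*ε⁻¹^11) / (π^2 * ε⁻¹^4 + 4*π^2*B*ε⁻¹^11 + 1)) * π^2 := by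
            ring
        _ < 1 * π^2 := by
            apply mul_lt_mul_of_pos_right _ (by positivity)
            rw [div_lt_one hD]; linarith
        _ = π^2 := one_mul _
    calc (π^2 * ε⁻¹^4 + 4*π^2*B*ε⁻¹^11) * g
        ≤ (π^2 * ε⁻¹^4 + 4*π^2*B*ε⁻¹^11) * (π^2/(π^2 * ε⁻¹^4 + 4*π^2*B*ε⁻¹^11 + 1)) := by
          apply mul_le_mul_of_nonneg_left hg2 (by positivity)
      _ < π^2 := h3
  linarith


lemma sidewall_numeric {B L t₀ v sn : ℝ} (hB0 : 0 < B) (hL : 0 < L)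
    (hb1 : |v| ≤ 2*B*t₀) (hb2 : |v| ≤ 2*B*(L⁻¹ - t₀))
    (hsin : 2 * min (L*t₀) (1 - L*t₀) ≤ sn) :
    v - B * L⁻¹ * sn ≤ 0 := by
  have hBL : (0:ℝ) ≤ B * L⁻¹ := by positivity
  rcases le_total t₀ (L⁻¹ - t₀) with hc | hc
  · have hmin : min (L * t₀) (1 - L * t₀) = L * t₀ := by
      apply min_eq_left
      nlinarith [mul_le_mul_of_nonneg_left hc hL.le, mul_inv_cancel₀ hL.ne']
    rw [hmin] at hsin
    have he : B * L⁻¹ * (2 * (L * t₀)) = 2 * B * t₀ := by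
      field_simp
    have h1 : B * L⁻¹ * (2 * (L * t₀)) ≤ B * L⁻¹ * sn := mul_le_mul_of_nonneg_left hsin hBL
    linarith [le_abs_self v, hb1]
  · have hmin : min (L * t₀) (1 - L * t₀) = 1 - L * t₀ := by
      apply min_eq_right
      nlinarith [mul_le_mul_of_nonneg_left hc hL.le, mul_inv_cancel₀ hL.ne']
    rw [hmin] at hsin
    have he : B * L⁻¹ * (2 * (1 - L * t₀)) = 2 * B * (L⁻¹ - t₀) := by
      field_simp
    have h1 : B * L⁻¹ * (2 * (1 - L * t₀)) ≤ B * L⁻¹ * sn := mul_le_mul_of_nonneg_left hsin hBL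
    linarith [le_abs_self v, hb2]

set_option maxHeartbeats 1000000 in
lemma interior_numeric {ε B L lam M sg ch sh Q1 Q2 S1 S2 T1 T2 : ℝ}
    (hε0 : 0 < ε) (hB0 : 0 < B) (hL : 0 < L)
    (hσ : 0 < sg) (hch0 : 0 < ch) (hshb : |sh| ≤ ch) (hM0 : 0 < M) (hlam0 : 0 < lam)
    (hq1l : -ε⁻¹ < Q1) (hq1u : Q1 < -ε) (hq2l : -ε⁻¹ < Q2) (hq2u : Q2 < -ε)
    (hS2b : |S2| ≤ B)
    (hE1' : T1 + π^2 * (Q1^4)⁻¹ * S1 = 0)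
    (hE2' : T2 + π^2 * (Q2^4)⁻¹ * S2 = 0)
    (hT2 : T1 - T2 - -(M * ch * (π*L)^2 * sg) ≤ 0)
    (hX2 : S1 - S2 - M * sg * lam^2 * ch ≤ 0)
    (hX1 : Q1 - Q2 - M * sg * lam * sh = 0) :
    (π*L)^2 ≤ (π^2*ε⁻¹^4) * lam^2 + (4*π^2*B*ε⁻¹^11) * lam := by
  have hQ1neg : Q1 < 0 := lt_trans hq1u (by linarith)
  have hQ2neg : Q2 < 0 := lt_trans hq2u (by linarith)
  have hQ14 : ε^4 ≤ Q1^4 := by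
    have h1 : ε^4 ≤ (-Q1)^4 := pow_le_pow_left₀ hε0.le (by linarith) 4
    have h2 : (-Q1)^4 = Q1^4 := by ring
    linarith
  have hQ24 : ε^4 ≤ Q2^4 := by
    have h1 : ε^4 ≤ (-Q2)^4 := pow_le_pow_left₀ hε0.le (by linarith) 4
    have h2 : (-Q2)^4 = Q2^4 := by ring
    linarith
  have hε4pos : (0:ℝ) < ε^4 := by positivity
  have hQ14pos : (0:ℝ) < Q1^4 := lt_of_lt_of_le hε4pos hQ14
  have hQ24pos : (0:ℝ) < Q2^4 := lt_of_lt_of_le hε4pos hQ24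
  have hq1a : |Q1| ≤ ε⁻¹ := by
    rw [abs_of_neg hQ1neg]; linarith
  have hq2a : |Q2| ≤ ε⁻¹ := by
    rw [abs_of_neg hQ2neg]; linarith
  have hA_lb : (0:ℝ) < π^2 * (Q1^4)⁻¹ := by positivity
  have hA_ub : π^2 * (Q1^4)⁻¹ ≤ π^2 * ε⁻¹^4 := by
    have h1 : (Q1^4)⁻¹ ≤ (ε^4)⁻¹ := inv_anti₀ hε4pos hQ14
    have h2 : (ε^4)⁻¹ = ε⁻¹^4 := by rw [inv_pow]
    rw [← h2]
    exact mul_le_mul_of_nonneg_left h1 (by positivity)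
  have halg : (T1 - T2) + (π^2 * (Q1^4)⁻¹) * (S1 - S2)
      - (π^2 * S2 * (Q1^3 + Q1^2*Q2 + Q1*Q2^2 + Q2^3) * (Q1^4*Q2^4)⁻¹) * (Q1 - Q2)
      = 0 := by
    have e1 : T1 = -(π^2 * (Q1^4)⁻¹ * S1) := by linarith
    have e2 : T2 = -(π^2 * (Q2^4)⁻¹ * S2) := by linarith
    rw [e1, e2]
    have := hQ1neg.ne; have := hQ2neg.ne
    field_simp
    ring
  have hSb : |Q1^3 + Q1^2*Q2 + Q1*Q2^2 + Q2^3| ≤ 4 * ε⁻¹^3 := by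
    have hεi : (0:ℝ) ≤ ε⁻¹ := by positivity
    have h3 : |Q1^3| ≤ ε⁻¹^3 := by
      rw [abs_pow]; exact pow_le_pow_left₀ (abs_nonneg _) hq1a 3
    have h6 : |Q2^3| ≤ ε⁻¹^3 := by
      rw [abs_pow]; exact pow_le_pow_left₀ (abs_nonneg _) hq2a 3
    have h4 : |Q1^2*Q2| ≤ ε⁻¹^3 := by
      rw [abs_mul, abs_pow]
      calc |Q1|^2 * |Q2| ≤ ε⁻¹^2 * ε⁻¹ :=
            mul_le_mul (pow_le_pow_left₀ (abs_nonneg _) hq1a 2) hq2a (abs_nonneg _)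
              (by positivity)
        _ = ε⁻¹^3 := by ring
    have h5 : |Q1*Q2^2| ≤ ε⁻¹^3 := by
      rw [abs_mul, abs_pow]
      calc |Q1| * |Q2|^2 ≤ ε⁻¹ * ε⁻¹^2 :=
            mul_le_mul hq1a (pow_le_pow_left₀ (abs_nonneg _) hq2a 2) (by positivity) hεi
        _ = ε⁻¹^3 := by ring
    have t1 := abs_add_le (Q1^3 + Q1^2*Q2 + Q1*Q2^2) (Q2^3)
    have t2 := abs_add_le (Q1^3 + Q1^2*Q2) (Q1*Q2^2)
    have t3 := abs_add_le (Q1^3) (Q1^2*Q2)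
    linarith
  have hinv_pos : (0:ℝ) < (Q1^4*Q2^4)⁻¹ := by positivity
  have hinvb : (Q1^4*Q2^4)⁻¹ ≤ (ε^4*ε^4)⁻¹ :=
    inv_anti₀ (by positivity) (mul_le_mul hQ14 hQ24 hε4pos.le hQ14pos.le)
  have hbb : |π^2 * S2 * (Q1^3 + Q1^2*Q2 + Q1*Q2^2 + Q2^3) * (Q1^4*Q2^4)⁻¹|
      ≤ 4*π^2*B*ε⁻¹^11 := by
    rw [abs_mul, abs_mul, abs_mul]
    rw [abs_of_nonneg (by positivity : (0:ℝ) ≤ π^2), abs_of_nonneg hinv_pos.le]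
    have step : π^2 * |S2| * |Q1^3 + Q1^2*Q2 + Q1*Q2^2 + Q2^3| * (Q1^4*Q2^4)⁻¹
        ≤ π^2 * B * (4*ε⁻¹^3) * (ε^4*ε^4)⁻¹ := by
      gcongr <;> assumption
    have heq : π^2 * B * (4*ε⁻¹^3) * (ε^4*ε^4)⁻¹ = 4*π^2*B*ε⁻¹^11 := by
      rw [show (ε^4*ε^4)⁻¹ = ε⁻¹^8 by rw [← pow_add, inv_pow]]
      ring
    linarith [heq ▸ step]
  have hQ12 : Q1 - Q2 = M * sg * lam * sh := by linarith
  have hcomb : (T1 - T2) + (π^2 * (Q1^4)⁻¹) * (S1 - S2)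
      ≤ -(M * ch * (π*L)^2 * sg) + (π^2 * (Q1^4)⁻¹) * (M * sg * lam^2 * ch) := by
    have l1 : T1 - T2 ≤ -(M * ch * (π*L)^2 * sg) := by linarith
    have l2 : S1 - S2 ≤ M * sg * lam^2 * ch := by linarith
    have l3 := mul_le_mul_of_nonneg_left l2 hA_lb.le
    linarith
  have h5 : |(π^2 * S2 * (Q1^3 + Q1^2*Q2 + Q1*Q2^2 + Q2^3) * (Q1^4*Q2^4)⁻¹)
      * (M * sg * lam * sh)| ≤ (4*π^2*B*ε⁻¹^11) * (M * sg * lam * ch) := by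
    rw [abs_mul]
    have h6 : |M * sg * lam * sh| ≤ M * sg * lam * ch := by
      rw [abs_mul, abs_of_nonneg (by positivity : (0:ℝ) ≤ M * sg * lam)]
      exact mul_le_mul_of_nonneg_left hshb (by positivity)
    exact mul_le_mul hbb h6 (abs_nonneg _) (by positivity)
  have hstar : -((4*π^2*B*ε⁻¹^11) * (M * sg * lam * ch))
      ≤ -(M * ch * (π*L)^2 * sg) + (π^2*ε⁻¹^4) * (M * sg * lam^2 * ch) := by
    have lhs1 : -((4*π^2*B*ε⁻¹^11) * (M * sg * lam * ch))
        ≤ (π^2 * S2 * (Q1^3 + Q1^2*Q2 + Q1*Q2^2 + Q2^3) * (Q1^4*Q2^4)⁻¹)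
          * (M * sg * lam * sh) := by
      have := neg_abs_le ((π^2 * S2 * (Q1^3 + Q1^2*Q2 + Q1*Q2^2 + Q2^3)
        * (Q1^4*Q2^4)⁻¹) * (M * sg * lam * sh))
      linarith
    have mid : (π^2 * S2 * (Q1^3 + Q1^2*Q2 + Q1*Q2^2 + Q2^3) * (Q1^4*Q2^4)⁻¹)
        * (M * sg * lam * sh) = (T1 - T2) + (π^2 * (Q1^4)⁻¹) * (S1 - S2) := by
      rw [← hQ12]
      linarith
    have rhs2 : (π^2 * (Q1^4)⁻¹) * (M * sg * lam^2 * ch)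
        ≤ (π^2*ε⁻¹^4) * (M * sg * lam^2 * ch) :=
      mul_le_mul_of_nonneg_right hA_ub (by positivity)
    linarith
  have hdivpos : (0:ℝ) < M * sg * ch := by positivity
  by_contra hcon
  push_neg at hcon
  nlinarith [hstar, mul_pos hdivpos (by linarith :
    (0:ℝ) < (π*L)^2 - ((π^2*ε⁻¹^4) * lam^2 + (4*π^2*B*ε⁻¹^11) * lam))]

lemma gam_contra {ε B L : ℝ} (hε0 : 0 < ε) (hB0 : 0 < B) (hL1 : 1 ≤ L)
    (h : (π*L)^2 ≤ (π^2*ε⁻¹^4) * (gam ε B * L)^2 + (4*π^2*B*ε⁻¹^11) * (gam ε B * L)) :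
    False := by
  have hgk := gam_key hε0 hB0
  have hL : (0:ℝ) < L := lt_of_lt_of_le one_pos hL1
  have hβγ : (0:ℝ) ≤ 4*π^2*B*ε⁻¹^11 * gam ε B := by
    have := (gam_pos hε0 hB0).le
    positivity
  have hLL : L ≤ L^2 := by nlinarith
  nlinarith [mul_lt_mul_of_pos_right hgk (show (0:ℝ) < L^2 by positivity),
    mul_le_mul_of_nonneg_left hLL hβγ, h]

/-! ### modified line_calc with explicit target function -/

lemma line_calcF {f g w F : ℝ → ℝ} {U : Set ℝ} (hU : IsOpen U) {t₀ : ℝ} (ht : t₀ ∈ U)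
    (hf : ContDiffOn ℝ 5 f U) (hg : ContDiffOn ℝ 5 g U)
    (hw1 : ∀ t, DifferentiableAt ℝ w t) (hw2 : ∀ t, DifferentiableAt ℝ (deriv w) t)
    (hF : F = fun s => f s - g s - w s) :
    deriv F t₀ = deriv f t₀ - deriv g t₀ - deriv w t₀ ∧
    deriv (deriv F) t₀ = deriv (deriv F) t₀ ∧
    deriv (deriv F) t₀ =
      deriv (deriv f) t₀ - deriv (deriv g) t₀ - deriv (deriv w) t₀ := by
  subst hF
  obtain ⟨h1, h2⟩ := line_calc hU ht hf hg hw1 hw2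
  exact ⟨h1, rfl, h2⟩

set_option maxHeartbeats 1000000 in
lemma key {ε r B L : ℝ} (hε : ε ∈ Ioo (0:ℝ) (1/4)) (hr : r ∈ Ioo (0:ℝ) (1/4)) (hB : 1 < B)
    (hL1 : 1 ≤ L) {F₁ F₂ : ℝ×ℝ→ℝ}
    (hA1 : AdmE ε F₁ (rect9 L)) (hA2 : AdmE ε F₂ (rect9 L))
    (hC1 : ContDiffOn ℝ 5 F₁ (closure (rect9 L))) (hC2 : ContDiffOn ℝ 5 F₂ (closure (rect9 L)))
    (hE1 : SatisfiesE F₁ (rect9 L)) (hE2 : SatisfiesE F₂ (rect9 L))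
    (hN1 : CmNorm 5 F₁ (rect9 L) ≤ ENNReal.ofReal B)
    (hN2 : CmNorm 5 F₂ (rect9 L) ≤ ENNReal.ofReal B)
    (hbd : ∀ z ∈ frontier (rect9 L), z.1 = 0 ∨ z.1 = L⁻¹ → F₁ z = F₂ z) :
    ∀ z ∈ Icc (0:ℝ) L⁻¹ ×ˢ Icc (r-1) (1-r),
      F₁ z - F₂ z ≤ 2*B*Real.exp (-(gam ε B * r * L / 2)) := by
  obtain ⟨hε0, hε4⟩ := hε
  obtain ⟨hr0, hr4⟩ := hr
  have hB0 : (0:ℝ) < B := lt_trans one_pos hB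
  have hL : (0:ℝ) < L := lt_of_lt_of_le one_pos hL1
  have hT0 : (0:ℝ) < L⁻¹ := by positivity
  have hT1 : L⁻¹ ≤ 1 := inv_le_one_of_one_le₀ hL1
  have hLne : L ≠ 0 := hL.ne'
  have ha0 : (0:ℝ) < 1 - r/2 := by linarith
  have ha1 : 1 - r/2 < 1 := by linarith
  have hg0 : 0 < gam ε B := gam_pos hε0 hB0
  have hg1 : gam ε B ≤ 1 := gam_le_one ε B
  have hlam0 : 0 < gam ε B * L := mul_pos hg0 hL
  have hcosh : 0 < Real.cosh (gam ε B * L * (1 - r/2)) := Real.cosh_pos _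
  -- the barrier constant
  set lam : ℝ := gam ε B * L with hlam_def
  set M : ℝ := B * L⁻¹ / Real.cosh (lam * (1 - r/2)) with hM_def
  have hM0 : 0 < M := div_pos (mul_pos hB0 hT0) hcosh
  set w : ℝ×ℝ→ℝ := fun z => M * Real.cosh (lam * z.2) * Real.sin (π * L * z.1) with hw_def
  have hRopen : IsOpen (rect9 L) := isOpen_Ioo.prod isOpen_Ioo
  have hclos := closure_rect9 hL
  have hfront := frontier_rect9 hL
  -- vanishing of F₁ - F₂ on the vertical boundary pieces
  have hzero : ∀ x ∈ Icc (-1:ℝ) 1, F₁ (0, x) = F₂ (0, x) ∧ F₁ (L⁻¹, x) = F₂ (L⁻¹, x) := by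
    intro x hx
    constructor
    · refine hbd (0, x) ?_ (Or.inl rfl)
      rw [hfront]
      exact ⟨⟨⟨le_refl 0, hT0.le⟩, hx⟩, fun hmem => lt_irrefl 0 hmem.1.1⟩
    · refine hbd (L⁻¹, x) ?_ (Or.inr rfl)
      rw [hfront]
      exact ⟨⟨⟨hT0.le, le_refl _⟩, hx⟩, fun hmem => lt_irrefl _ hmem.1.2⟩
  -- derivative bounds from the C⁵ norm
  have hpdT1 : ∀ z ∈ rect9 L, |pdT F₁ z| ≤ B := by
    intro z hz
    have := cm_bound hB0.le hN1 (i := 1) (j := 0) (by norm_num) z hz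
    rwa [pdIter_one_zero] at this
  have hpdT2 : ∀ z ∈ rect9 L, |pdT F₂ z| ≤ B := by
    intro z hz
    have := cm_bound hB0.le hN2 (i := 1) (j := 0) (by norm_num) z hz
    rwa [pdIter_one_zero] at this
  have hs2bd : ∀ z ∈ rect9 L, |pdX (pdX F₂) z| ≤ B := by
    intro z hz
    have := cm_bound hB0.le hN2 (i := 0) (j := 2) (by norm_num) z hz
    rwa [pdIter_zero_two] at this
  -- MVT side estimates
  have hside1 : ∀ x₀ ∈ Ioo (-1:ℝ) 1, ∀ t ∈ Icc (0:ℝ) L⁻¹,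
      |F₁ (t,x₀) - F₂ (t,x₀)| ≤ 2*B*t ∧ |F₁ (t,x₀) - F₂ (t,x₀)| ≤ 2*B*(L⁻¹ - t) := by
    intro x₀ hx₀ t ht
    have hx₀c : x₀ ∈ Icc (-1:ℝ) 1 := Ioo_subset_Icc_self hx₀
    have hφc : ContinuousOn (fun s => F₁ (s, x₀) - F₂ (s, x₀)) (Icc 0 L⁻¹) := by
      have hl : ContinuousOn (fun s : ℝ => (s, x₀)) (Icc 0 L⁻¹) :=
        (continuous_id.prodMk continuous_const).continuousOn
      have hmap : MapsTo (fun s : ℝ => (s, x₀)) (Icc 0 L⁻¹) (closure (rect9 L)) :=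
        fun s hs => by rw [hclos]; exact ⟨hs, hx₀c⟩
      exact (hA1.1.comp hl hmap).sub (hA2.1.comp hl hmap)
    have hφd : DifferentiableOn ℝ (fun s => F₁ (s, x₀) - F₂ (s, x₀)) (Ioo 0 L⁻¹) := by
      have hl : DifferentiableOn ℝ (fun s : ℝ => (s, x₀)) (Ioo 0 L⁻¹) :=
        (differentiable_id.prodMk (differentiable_const _)).differentiableOn
      have hmap : MapsTo (fun s : ℝ => (s, x₀)) (Ioo 0 L⁻¹) (rect9 L) :=
        fun s hs => ⟨hs, hx₀⟩
      exact (hA1.2.1.comp hl hmap).sub (hA2.2.1.comp hl hmap)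
    have hder : ∀ ξ ∈ Ioo (0:ℝ) L⁻¹, |deriv (fun s => F₁ (s, x₀) - F₂ (s, x₀)) ξ| ≤ 2*B := by
      intro ξ hξ
      have hmem : (ξ, x₀) ∈ rect9 L := ⟨hξ, hx₀⟩
      have hd1 : DifferentiableAt ℝ (fun s => F₁ (s,x₀)) ξ :=
        ((lineT_contDiff hL hC1 hx₀c).differentiableOn (by norm_num)).differentiableAt
          (isOpen_Ioo.mem_nhds hξ)
      have hd2 : DifferentiableAt ℝ (fun s => F₂ (s,x₀)) ξ :=
        ((lineT_contDiff hL hC2 hx₀c).differentiableOn (by norm_num)).differentiableAt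
          (isOpen_Ioo.mem_nhds hξ)
      rw [deriv_fun_sub hd1 hd2]
      have e1 : deriv (fun s => F₁ (s,x₀)) ξ = pdT F₁ (ξ,x₀) := rfl
      have e2 : deriv (fun s => F₂ (s,x₀)) ξ = pdT F₂ (ξ,x₀) := rfl
      rw [e1, e2]
      calc |pdT F₁ (ξ,x₀) - pdT F₂ (ξ,x₀)| ≤ |pdT F₁ (ξ,x₀)| + |pdT F₂ (ξ,x₀)| :=
            abs_sub _ _
        _ ≤ B + B := add_le_add (hpdT1 _ hmem) (hpdT2 _ hmem)
        _ = 2*B := by ring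
    have hv0 : F₁ (0, x₀) - F₂ (0, x₀) = 0 := sub_eq_zero.mpr (hzero x₀ hx₀c).1
    have hvT : F₁ (L⁻¹, x₀) - F₂ (L⁻¹, x₀) = 0 := sub_eq_zero.mpr (hzero x₀ hx₀c).2
    constructor
    · rcases eq_or_lt_of_le ht.1 with h0 | h0
      · rw [← h0, hv0, abs_zero]; positivity
      · obtain ⟨ξ, hξ, hslope⟩ := exists_deriv_eq_slope (fun s => F₁ (s, x₀) - F₂ (s, x₀)) h0
          (hφc.mono (Icc_subset_Icc le_rfl ht.2))
          (hφd.mono (Ioo_subset_Ioo le_rfl ht.2))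
        have hξI : ξ ∈ Ioo (0:ℝ) L⁻¹ := ⟨hξ.1, lt_of_lt_of_le hξ.2 ht.2⟩
        have hd := hder ξ hξI
        rw [hv0, sub_zero, sub_zero] at hslope
        have heq : F₁ (t, x₀) - F₂ (t, x₀)
            = deriv (fun s => F₁ (s, x₀) - F₂ (s, x₀)) ξ * t := by
          rw [hslope]; field_simp
        rw [heq, abs_mul, abs_of_pos h0]
        exact mul_le_mul_of_nonneg_right hd h0.le
    · rcases eq_or_lt_of_le ht.2 with hTT | hTT
      · rw [hTT, hvT, abs_zero]
        simp [hTT]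
      · obtain ⟨ξ, hξ, hslope⟩ := exists_deriv_eq_slope (fun s => F₁ (s, x₀) - F₂ (s, x₀)) hTT
          (hφc.mono (Icc_subset_Icc ht.1 le_rfl))
          (hφd.mono (Ioo_subset_Ioo ht.1 le_rfl))
        have hξI : ξ ∈ Ioo (0:ℝ) L⁻¹ := ⟨lt_of_le_of_lt ht.1 hξ.1, hξ.2⟩
        have hd := hder ξ hξI
        rw [hvT] at hslope
        have hne : L⁻¹ - t ≠ 0 := by
          have : t < L⁻¹ := hTT
          intro h0
          exact absurd (by linarith : L⁻¹ = t) (by linarith)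
        have heq : F₁ (t, x₀) - F₂ (t, x₀)
            = -(deriv (fun s => F₁ (s, x₀) - F₂ (s, x₀)) ξ * (L⁻¹ - t)) := by
          have h2 : deriv (fun s => F₁ (s, x₀) - F₂ (s, x₀)) ξ * (L⁻¹ - t)
              = (0 - (F₁ (t, x₀) - F₂ (t, x₀))) / (L⁻¹ - t) * (L⁻¹ - t) := by rw [hslope]
          rw [div_mul_cancel₀ _ hne] at h2
          linarith
        rw [heq, abs_neg, abs_mul, abs_of_pos (by linarith : (0:ℝ) < L⁻¹ - t)]
        exact mul_le_mul_of_nonneg_right hd (by linarith)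
  -- maximum of u on K
  have hKsub : Icc (0:ℝ) L⁻¹ ×ˢ Icc (-(1 - r/2)) (1 - r/2) ⊆ closure (rect9 L) := by
    rw [hclos]
    exact prod_mono (subset_refl _) (Icc_subset_Icc (by linarith) (by linarith))
  have hwcont : Continuous w := by
    rw [hw_def]
    exact (continuous_const.mul (Real.continuous_cosh.comp
      (continuous_const.mul continuous_snd))).mul
      (Real.continuous_sin.comp (continuous_const.mul continuous_fst))
  have hucont : ContinuousOn (fun z => F₁ z - F₂ z - w z)
      (Icc (0:ℝ) L⁻¹ ×ˢ Icc (-(1 - r/2)) (1 - r/2)) :=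
    ((hA1.1.mono hKsub).sub (hA2.1.mono hKsub)).sub hwcont.continuousOn
  have hKcpt : IsCompact (Icc (0:ℝ) L⁻¹ ×ˢ Icc (-(1 - r/2)) (1 - r/2)) :=
    isCompact_Icc.prod isCompact_Icc
  have hKne : (Icc (0:ℝ) L⁻¹ ×ˢ Icc (-(1 - r/2)) (1 - r/2)).Nonempty :=
    ⟨(0, 0), ⟨⟨le_refl 0, hT0.le⟩, ⟨by linarith, by linarith⟩⟩⟩
  obtain ⟨z₀, hz₀K, hz₀max⟩ := hKcpt.exists_isMaxOn hKne hucont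
  have hu0 : F₁ z₀ - F₂ z₀ - w z₀ ≤ 0 := by
    obtain ⟨t₀, x₀⟩ := z₀
    obtain ⟨ht₀K, hx₀K⟩ := hz₀K
    simp only [mem_Icc] at ht₀K hx₀K
    by_cases htI : t₀ ∈ Ioo (0:ℝ) L⁻¹
    · by_cases hxI : x₀ ∈ Ioo (-(1 - r/2)) (1 - r/2)
      · -- interior maximum: contradiction
        exfalso
        have hx₀J : x₀ ∈ Ioo (-1:ℝ) 1 := ⟨by linarith [hxI.1], by linarith [hxI.2]⟩
        have hzR : (t₀, x₀) ∈ rect9 L := ⟨htI, hx₀J⟩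
        have ht₀c : t₀ ∈ Icc (0:ℝ) L⁻¹ := Ioo_subset_Icc_self htI
        have hx₀c : x₀ ∈ Icc (-1:ℝ) 1 := Ioo_subset_Icc_self hx₀J
        -- local maxima along the coordinate lines
        have hTmax : IsLocalMax (fun s => F₁ (s,x₀) - F₂ (s,x₀)
            - (M * Real.cosh (lam * x₀)) * Real.sin (π * L * s)) t₀ := by
          filter_upwards [isOpen_Ioo.mem_nhds htI] with s hs
          have h1 : F₁ (s,x₀) - F₂ (s,x₀) - w (s,x₀)
              ≤ F₁ (t₀,x₀) - F₂ (t₀,x₀) - w (t₀,x₀) :=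
            hz₀max ⟨Ioo_subset_Icc_self hs, mem_Icc.mpr hx₀K⟩
          simp only [hw_def] at h1
          exact h1
        have hXmax : IsLocalMax (fun x => F₁ (t₀,x) - F₂ (t₀,x)
            - (M * Real.sin (π * L * t₀)) * Real.cosh (lam * x)) x₀ := by
          filter_upwards [isOpen_Ioo.mem_nhds hxI] with x hx
          have h1 : F₁ (t₀,x) - F₂ (t₀,x) - w (t₀,x)
              ≤ F₁ (t₀,x₀) - F₂ (t₀,x₀) - w (t₀,x₀) :=
            hz₀max ⟨mem_Icc.mpr ht₀K, Ioo_subset_Icc_self hx⟩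
          simp only [hw_def] at h1
          have e : ∀ y : ℝ, M * Real.cosh (lam * y) * Real.sin (π * L * t₀)
              = (M * Real.sin (π * L * t₀)) * Real.cosh (lam * y) := fun y => by ring
          rw [e x, e x₀] at h1
          exact h1
        -- regularity of the lines
        have hgf1 : ContDiffOn ℝ 5 (fun s => F₁ (s,x₀)) (Ioo 0 L⁻¹) :=
          lineT_contDiff hL hC1 hx₀c
        have hgf2 : ContDiffOn ℝ 5 (fun s => F₂ (s,x₀)) (Ioo 0 L⁻¹) :=
          lineT_contDiff hL hC2 hx₀c
        have hkf1 : ContDiffOn ℝ 5 (fun x => F₁ (t₀,x)) (Ioo (-1:ℝ) 1) :=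
          lineX_contDiff hL hC1 ht₀c
        have hkf2 : ContDiffOn ℝ 5 (fun x => F₂ (t₀,x)) (Ioo (-1:ℝ) 1) :=
          lineX_contDiff hL hC2 ht₀c
        -- derivative decompositions
        obtain ⟨-, -, hdt2⟩ := line_calcF
          (F := fun s => F₁ (s,x₀) - F₂ (s,x₀)
            - (M * Real.cosh (lam * x₀)) * Real.sin (π * L * s))
          isOpen_Ioo htI hgf1 hgf2
          (sinL_diffs (M * Real.cosh (lam * x₀)) (π*L)).1
          (sinL_diffs (M * Real.cosh (lam * x₀)) (π*L)).2 rfl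
        obtain ⟨hdx1, -, hdx2⟩ := line_calcF
          (F := fun x => F₁ (t₀,x) - F₂ (t₀,x)
            - (M * Real.sin (π * L * t₀)) * Real.cosh (lam * x))
          isOpen_Ioo hx₀J hkf1 hkf2
          (coshL_diffs (M * Real.sin (π * L * t₀)) lam).1
          (coshL_diffs (M * Real.sin (π * L * t₀)) lam).2 rfl
        -- second-derivative tests
        have hT2 := deriv2_nonpos_of_isLocalMax isOpen_Ioo htI
          (((hgf1.sub hgf2).sub ((contDiff_sinL (M * Real.cosh (lam * x₀)) (π*L)).contDiffOn)).of_le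
            (by norm_num)) hTmax
        have hX2 := deriv2_nonpos_of_isLocalMax isOpen_Ioo hx₀J
          (((hkf1.sub hkf2).sub ((contDiff_coshL (M * Real.sin (π * L * t₀)) lam).contDiffOn)).of_le
            (by norm_num)) hXmax
        have hX1 : deriv (fun x => F₁ (t₀,x) - F₂ (t₀,x)
            - (M * Real.sin (π * L * t₀)) * Real.cosh (lam * x)) x₀ = 0 := hXmax.deriv_eq_zero
        -- explicit barrier derivatives
        rw [deriv2_sinL] at hdt2
        rw [deriv2_coshL] at hdx2
        have hqw : deriv (fun x => (M * Real.sin (π * L * t₀)) * Real.cosh (lam * x)) x₀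
            = (M * Real.sin (π * L * t₀)) * lam * Real.sinh (lam * x₀) :=
          congrFun (deriv_coshL (M * Real.sin (π * L * t₀)) lam) x₀
        rw [hqw] at hdx1
        -- equation (E) at the point
        have hEa := hE1 (t₀,x₀) hzR
        have hEb := hE2 (t₀,x₀) hzR
        have hQ1ne : deriv (fun x => F₁ (t₀,x)) x₀ ≠ 0 := hEa.1
        have hQ2ne : deriv (fun x => F₂ (t₀,x)) x₀ ≠ 0 := hEb.1
        have hE1' : deriv (deriv (fun s => F₁ (s,x₀))) t₀
            + π^2 * ((deriv (fun x => F₁ (t₀,x)) x₀)^4)⁻¹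
              * deriv (deriv (fun x => F₁ (t₀,x))) x₀ = 0 := hEa.2
        have hE2' : deriv (deriv (fun s => F₂ (s,x₀))) t₀
            + π^2 * ((deriv (fun x => F₂ (t₀,x)) x₀)^4)⁻¹
              * deriv (deriv (fun x => F₂ (t₀,x))) x₀ = 0 := hEb.2
        have hq1b : -ε⁻¹ < deriv (fun x => F₁ (t₀,x)) x₀
            ∧ deriv (fun x => F₁ (t₀,x)) x₀ < -ε := hA1.2.2 (t₀,x₀) hzR
        have hq2b : -ε⁻¹ < deriv (fun x => F₂ (t₀,x)) x₀
            ∧ deriv (fun x => F₂ (t₀,x)) x₀ < -ε := hA2.2.2 (t₀,x₀) hzR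
        have hS2b : |deriv (deriv (fun x => F₂ (t₀,x))) x₀| ≤ B := hs2bd (t₀,x₀) hzR
        -- abbreviations
        set Q1 := deriv (fun x => F₁ (t₀,x)) x₀ with hQ1_def
        set Q2 := deriv (fun x => F₂ (t₀,x)) x₀ with hQ2_def
        set S1 := deriv (deriv (fun x => F₁ (t₀,x))) x₀ with hS1_def
        set S2 := deriv (deriv (fun x => F₂ (t₀,x))) x₀ with hS2_def
        set T1 := deriv (deriv (fun s => F₁ (s,x₀))) t₀ with hT1_def
        set T2 := deriv (deriv (fun s => F₂ (s,x₀))) t₀ with hT2_def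
        set sg := Real.sin (π * L * t₀) with hsg_def
        set ch := Real.cosh (lam * x₀) with hch_def
        set sh := Real.sinh (lam * x₀) with hsh_def
        have hσ : 0 < sg := by
          rw [hsg_def]
          apply Real.sin_pos_of_pos_of_lt_pi
          · exact mul_pos (mul_pos Real.pi_pos hL) htI.1
          · have h1 : L * t₀ < 1 := by
              calc L * t₀ < L * L⁻¹ := mul_lt_mul_of_pos_left htI.2 hL
                _ = 1 := mul_inv_cancel₀ hL.ne'
            calc π * L * t₀ = π * (L * t₀) := by ring
              _ < π * 1 := mul_lt_mul_of_pos_left h1 Real.pi_pos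
              _ = π := mul_one π
        have hch0 : 0 < ch := Real.cosh_pos _
        have hshb : |sh| ≤ ch := abs_sinh_le_cosh _
        rw [hdt2] at hT2
        rw [hdx2] at hX2
        rw [hdx1] at hX1
        have hnum := interior_numeric hε0 hB0 hL hσ hch0 hshb hM0 hlam0
          hq1b.1 hq1b.2 hq2b.1 hq2b.2 hS2b hE1' hE2' hT2 hX2 hX1
        rw [hlam_def] at hnum
        exact gam_contra hε0 hB0 hL1 hnum
      · -- side walls x₀ = ±(1 - r/2)
        have hxa : Real.cosh (lam * x₀) = Real.cosh (lam * (1 - r/2)) := by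
          have hx2 : x₀ = -(1 - r/2) ∨ x₀ = 1 - r/2 := by
            simp only [mem_Ioo, not_and_or, not_lt] at hxI
            rcases hxI with h | h
            · exact Or.inl (le_antisymm h hx₀K.1)
            · exact Or.inr (le_antisymm hx₀K.2 h)
          rcases hx2 with h | h
          · rw [h, show lam * -(1 - r/2) = -(lam * (1 - r/2)) by ring, Real.cosh_neg]
          · rw [h]
        have hx₀o : x₀ ∈ Ioo (-1:ℝ) 1 := ⟨by linarith [hx₀K.1], by linarith [hx₀K.2]⟩
        have hMch : M * Real.cosh (lam * (1 - r/2)) = B * L⁻¹ := by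
          rw [hM_def]; field_simp
        have hwz : w (t₀, x₀) = B * L⁻¹ * Real.sin (π * L * t₀) := by
          simp only [hw_def]
          rw [hxa, hMch]
        obtain ⟨hb1, hb2⟩ := hside1 x₀ hx₀o t₀ ⟨htI.1.le, htI.2.le⟩
        have hs01 : 0 ≤ L * t₀ := mul_nonneg hL.le htI.1.le
        have hs11 : L * t₀ ≤ 1 := by
          calc L * t₀ ≤ L * L⁻¹ := mul_le_mul_of_nonneg_left htI.2.le hL.le
            _ = 1 := mul_inv_cancel₀ hL.ne'
        have hsin := sin_lb hs01 hs11
        rw [show π * (L * t₀) = π * L * t₀ by ring] at hsin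
        rw [hwz]
        exact sidewall_numeric hB0 hL hb1 hb2 hsin
    · -- t₀ = 0 or t₀ = L⁻¹
      have ht : t₀ = 0 ∨ t₀ = L⁻¹ := by
        simp only [mem_Ioo, not_and_or, not_lt] at htI
        rcases htI with h | h
        · exact Or.inl (le_antisymm h ht₀K.1)
        · exact Or.inr (le_antisymm ht₀K.2 h)
      have hx₀c : x₀ ∈ Icc (-1:ℝ) 1 := ⟨by linarith [hx₀K.1], by linarith [hx₀K.2]⟩
      have hsin0 : Real.sin (π * L * t₀) = 0 := by
        rcases ht with h | h
        · rw [h, mul_zero, Real.sin_zero]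
        · rw [h, mul_assoc, mul_inv_cancel₀ hL.ne', mul_one, Real.sin_pi]
      have hveq : F₁ (t₀, x₀) = F₂ (t₀, x₀) := by
        rcases ht with h | h
        · rw [h]; exact (hzero x₀ hx₀c).1
        · rw [h]; exact (hzero x₀ hx₀c).2
      have hwz : w (t₀, x₀) = 0 := by
        simp only [hw_def]
        rw [hsin0, mul_zero]
      rw [hveq, hwz]; simp
  -- conclusion
  intro z hz
  have hzK : z ∈ Icc (0:ℝ) L⁻¹ ×ˢ Icc (-(1 - r/2)) (1 - r/2) :=
    ⟨hz.1, ⟨by linarith [hz.2.1], by linarith [hz.2.2]⟩⟩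
  have h1 : F₁ z - F₂ z - w z ≤ 0 := le_trans (hz₀max hzK) hu0
  have h2 : w z ≤ M * Real.cosh (lam * (1 - r)) := by
    have hch : Real.cosh (lam * z.2) ≤ Real.cosh (lam * (1 - r)) := by
      rw [Real.cosh_le_cosh]
      have h1 : |z.2| ≤ 1 - r := abs_le.mpr ⟨by linarith [hz.2.1], hz.2.2⟩
      calc |lam * z.2| = |lam| * |z.2| := abs_mul _ _
        _ ≤ |lam| * (1 - r) := mul_le_mul_of_nonneg_left h1 (abs_nonneg _)
        _ = lam * (1 - r) := by rw [abs_of_pos hlam0]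
        _ ≤ |lam * (1 - r)| := le_abs_self _
    have hpos : 0 < M * Real.cosh (lam * z.2) := mul_pos hM0 (Real.cosh_pos _)
    calc w z ≤ M * Real.cosh (lam * z.2) * 1 :=
          mul_le_mul_of_nonneg_left (Real.sin_le_one _) hpos.le
      _ = M * Real.cosh (lam * z.2) := mul_one _
      _ ≤ M * Real.cosh (lam * (1 - r)) := mul_le_mul_of_nonneg_left hch hM0.le
  have h3 : M * Real.cosh (lam * (1 - r)) ≤ 2*B*Real.exp (-(gam ε B * r * L / 2)) := by
    have hratio := cosh_ratio_le (y := lam * (1 - r)) (d := lam * (r/2))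
      (mul_nonneg hlam0.le (by linarith)) (mul_nonneg hlam0.le (by linarith))
    have harg : lam * (1 - r) + lam * (r/2) = lam * (1 - r/2) := by ring
    rw [harg] at hratio
    calc M * Real.cosh (lam * (1 - r))
        ≤ M * (2 * Real.exp (-(lam * (r/2))) * Real.cosh (lam * (1 - r/2))) :=
          mul_le_mul_of_nonneg_left hratio hM0.le
      _ = B * L⁻¹ * 2 * Real.exp (-(lam * (r/2))) := by
          rw [hM_def]; field_simp
      _ ≤ 2*B*Real.exp (-(gam ε B * r * L / 2)) := by
          rw [show -(lam * (r/2)) = -(gam ε B * r * L / 2) by rw [hlam_def]; ring]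
          have hE : 0 ≤ Real.exp (-(gam ε B * r * L / 2)) := (Real.exp_pos _).le
          have hfac : B * L⁻¹ * 2 ≤ 2 * B := by
            have := mul_le_mul_of_nonneg_left hT1 hB0.le
            linarith
          exact mul_le_mul_of_nonneg_right hfac hE
  linarith

theorem statement9 (ε r B : ℝ)
    (hε : ε ∈ Ioo (0 : ℝ) (1 / 4)) (hr : r ∈ Ioo (0 : ℝ) (1 / 4)) (hB : 1 < B) :
    ∃ c : ℝ, 0 < c ∧
      ∀ L : ℝ, 0 < L → ∀ F₁ F₂ : ℝ × ℝ → ℝ,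
        AdmE ε F₁ (rect9 L) → AdmE ε F₂ (rect9 L) →
        ContDiffOn ℝ 5 F₁ (closure (rect9 L)) → ContDiffOn ℝ 5 F₂ (closure (rect9 L)) →
        SatisfiesE F₁ (rect9 L) → SatisfiesE F₂ (rect9 L) →
        CmNorm 5 F₁ (rect9 L) ≤ ENNReal.ofReal B →
        CmNorm 5 F₂ (rect9 L) ≤ ENNReal.ofReal B →
        (∀ z ∈ frontier (rect9 L), z.1 = 0 ∨ z.1 = L⁻¹ → F₁ z = F₂ z) →
        ∀ z ∈ Icc (0 : ℝ) L⁻¹ ×ˢ Icc (r - 1) (1 - r),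
          |F₁ z - F₂ z| ≤ c⁻¹ * Real.exp (-c * L ^ ((1 : ℝ) / 8)) := by
  have hB0 : (0:ℝ) < B := lt_trans one_pos hB
  have hg0 : 0 < gam ε B := gam_pos hε.1 hB0
  have h4B : (0:ℝ) < 4*B := by linarith
  set c : ℝ := min (gam ε B * r / 4) (1/(4*B)) with hc_def
  have hc0 : 0 < c := lt_min (div_pos (mul_pos hg0 hr.1) (by norm_num))
    (div_pos one_pos h4B)
  have hcB : c ≤ 1/(4*B) := min_le_right _ _
  have hcg : c ≤ gam ε B * r / 4 := min_le_left _ _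
  have hcinv : 4*B ≤ c⁻¹ := by
    have h1 : (1/(4*B))⁻¹ ≤ c⁻¹ := inv_anti₀ hc0 hcB
    rwa [one_div, inv_inv] at h1
  have hcle : c ≤ 1/4 := by
    have h1 : (1:ℝ)/(4*B) ≤ 1/4 := by
      rw [div_le_div_iff₀ h4B (by norm_num)]
      nlinarith
    linarith
  refine ⟨c, hc0, ?_⟩
  intro L hL F₁ F₂ hA1 hA2 hC1 hC2 hE1 hE2 hN1 hN2 hbd z hz
  have hcinv0 : (0:ℝ) ≤ c⁻¹ := by positivity
  by_cases hL1 : 1 ≤ L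
  · have h1 := key hε hr hB hL1 hA1 hA2 hC1 hC2 hE1 hE2 hN1 hN2 hbd z hz
    have hbd' : ∀ z ∈ frontier (rect9 L), z.1 = 0 ∨ z.1 = L⁻¹ → F₂ z = F₁ z :=
      fun z hz h => (hbd z hz h).symm
    have h2 := key hε hr hB hL1 hA2 hA1 hC2 hC1 hE2 hE1 hN2 hN1 hbd' z hz
    have habs : |F₁ z - F₂ z| ≤ 2*B*Real.exp (-(gam ε B * r * L / 2)) :=
      abs_le.mpr ⟨by linarith, h1⟩
    have hexp : Real.exp (-(gam ε B * r * L / 2)) ≤ Real.exp (-c * L ^ ((1:ℝ)/8)) := by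
      apply Real.exp_le_exp.mpr
      have hr18 : L ^ ((1:ℝ)/8) ≤ L := by
        calc L ^ ((1:ℝ)/8) ≤ L ^ (1:ℝ) :=
              Real.rpow_le_rpow_of_exponent_le hL1 (by norm_num)
          _ = L := Real.rpow_one L
      have hpow0 : 0 ≤ L ^ ((1:ℝ)/8) := Real.rpow_nonneg hL.le _
      have h4 : c * L ^ ((1:ℝ)/8) ≤ (gam ε B * r / 4) * L :=
        mul_le_mul hcg hr18 hpow0 (div_nonneg (mul_nonneg hg0.le hr.1.le) (by norm_num))
      have h5 : 0 ≤ gam ε B * r * L := mul_nonneg (mul_nonneg hg0.le hr.1.le) hL.le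
      nlinarith [h4, h5]
    have hstep : 2*B*Real.exp (-(gam ε B * r * L / 2))
        ≤ c⁻¹ * Real.exp (-c * L ^ ((1:ℝ)/8)) := by
      calc 2*B*Real.exp (-(gam ε B * r * L / 2))
          ≤ 2*B*Real.exp (-c * L ^ ((1:ℝ)/8)) :=
            mul_le_mul_of_nonneg_left hexp (by linarith)
        _ ≤ c⁻¹ * Real.exp (-c * L ^ ((1:ℝ)/8)) :=
            mul_le_mul_of_nonneg_right (by linarith) (Real.exp_pos _).le
    linarith
  · push_neg at hL1
    have hF1b : ∀ y ∈ closure (rect9 L), |F₁ y| ≤ B := by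
      apply bound_on_closure hA1.1
      intro y hy
      have := cm_bound hB0.le hN1 (i := 0) (j := 0) (by norm_num) y hy
      rwa [pdIter_zero_zero] at this
    have hF2b : ∀ y ∈ closure (rect9 L), |F₂ y| ≤ B := by
      apply bound_on_closure hA2.1
      intro y hy
      have := cm_bound hB0.le hN2 (i := 0) (j := 0) (by norm_num) y hy
      rwa [pdIter_zero_zero] at this
    have hzc : z ∈ closure (rect9 L) := by
      rw [closure_rect9 hL]
      exact ⟨hz.1, ⟨by linarith [hz.2.1, hr.1], by linarith [hz.2.2, hr.1]⟩⟩
    have habs : |F₁ z - F₂ z| ≤ 2*B := by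
      calc |F₁ z - F₂ z| ≤ |F₁ z| + |F₂ z| := abs_sub _ _
        _ ≤ B + B := add_le_add (hF1b z hzc) (hF2b z hzc)
        _ = 2*B := by ring
    have hstep : 2*B ≤ c⁻¹ * Real.exp (-c * L ^ ((1:ℝ)/8)) := by
      have hp1 : L ^ ((1:ℝ)/8) ≤ 1 := Real.rpow_le_one hL.le hL1.le (by norm_num)
      have hp0 : 0 ≤ L ^ ((1:ℝ)/8) := Real.rpow_nonneg hL.le _
      have hexp : 1 - c ≤ Real.exp (-c * L ^ ((1:ℝ)/8)) := by
        have ha : -c ≤ -c * L ^ ((1:ℝ)/8) := by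
          nlinarith [mul_le_mul_of_nonneg_left hp1 hc0.le]
        have hb' : 1 - c ≤ Real.exp (-c) := by
          linarith [Real.add_one_le_exp (-c)]
        linarith [Real.exp_le_exp.mpr ha]
      have hmm : (4*B) * (1 - c) ≤ c⁻¹ * Real.exp (-c * L ^ ((1:ℝ)/8)) :=
        mul_le_mul hcinv hexp (by linarith) hcinv0
      nlinarith [mul_le_mul_of_nonneg_left hcle hB0.le]
    linarith
end
end

section
/- For any reals ε > 0 and B > 1, there exist constants c > 0 and C > 1, depending only on (ε, B), such that the following holds. Let L > 1 and L₀ ∈ [L/(2B), 2BL] be reals; set R₀ = (0,1)×(−L₀, L₀) ⊂ ℝ²; and let F₁, F₂ ∈ Adm_ε(R₀) ∩ C⁵(closure(R₀)) satisfy equation (E) on R₀. Fix a point z = (t₀, x₀) ∈ R₀ with [x₀ − 2L^{1/2}, x₀ + 2L^{1/2}] ⊂ (−L₀, L₀), and a real A with 0 ≤ A ≤ B. Assume: (1) for every w ∈ R₀, i ∈ {1,2} and j,k ∈ {t,x}, |∇F_i(w)| ≤ B and |∂_j∂_k F_i(w)| ≤ B/L, and moreover ∑_{j=1}^5 [F_i]_{j;R₀}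 ≤ B; (2) F₁(w) = F₂(w) for every w ∈ ∂R₀ with |w − z| ≤ 2L^{1/2}; (3) |F₁(w) − F₂(w)| ≤ A for every w ∈ ∂R₀. Then |F₁(z) − F₂(z)| ≤ C·(L^{−1/8}·A + exp(−c·L^{1/8})). -/
open Real Set MeasureTheory Filter
open Topology
open scoped ENNReal

noncomputable section

/-- The rectangle `ℜ₀ = (0, 1) × (−L₀, L₀)`. -/
def rect11 (L₀ : ℝ) : Set (ℝ × ℝ) := Ioo (0 : ℝ) 1 ×ˢ Ioo (-L₀) L₀


/-- Second derivative test at an interior local minimum. -/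
lemma second_deriv_test_aux {f g : ℝ → ℝ} {p k : ℝ} (hmin : IsLocalMin f p)
    (hfg : ∀ᶠ x in nhds p, HasDerivAt f (g x) x) (hg : HasDerivAt g k p) : 0 ≤ k := by
  by_contra hk
  push_neg at hk
  have hgp : g p = 0 := hmin.hasDerivAt_eq_zero hfg.self_of_nhds
  have hslope : Tendsto (slope g p) (𝓝[≠] p) (𝓝 k) := hasDerivAt_iff_tendsto_slope.mp hg
  have h2 : ∀ᶠ x in 𝓝[≠] p, slope g p x < k / 2 :=
    hslope.eventually_lt_const (by linarith)
  rw [eventually_nhdsWithin_iff] at h2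
  have hall : ∀ᶠ x in 𝓝 p,
      (HasDerivAt f (g x) x ∧ f p ≤ f x) ∧ (x ≠ p → slope g p x < k / 2) :=
    (hfg.and hmin).and h2
  rcases Metric.eventually_nhds_iff.mp hall with ⟨δ, hδ, hball⟩
  have hmem : ∀ x ∈ Icc p (p + δ / 2), dist x p < δ := by
    intro x hx
    rw [Real.dist_eq, abs_lt]
    constructor <;> [linarith [hx.1]; linarith [hx.2]]
  have hpq : p < p + δ / 2 := by linarith
  have hanti : StrictAntiOn f (Icc p (p + δ / 2)) := by
    apply strictAntiOn_of_deriv_neg (convex_Icc _ _)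
    · intro x hx
      exact ((hball (hmem x hx)).1.1).continuousAt.continuousWithinAt
    · intro x hx
      rw [interior_Icc] at hx
      have hx' := hball (hmem x (Ioo_subset_Icc_self hx))
      have hne : x ≠ p := ne_of_gt hx.1
      have hs := hx'.2 hne
      rw [slope_def_field, hgp, sub_zero] at hs
      have hxp : 0 < x - p := by linarith [hx.1]
      rw [hx'.1.1.deriv]
      have : g x < k / 2 * (x - p) := by
        rw [div_lt_iff₀ hxp] at hs
        linarith [hs]
      nlinarith
  have h1 : f (p + δ / 2) < f p :=
    hanti (left_mem_Icc.mpr hpq.le) (right_mem_Icc.mpr hpq.le) hpq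
  have h2 : f p ≤ f (p + δ / 2) := by
    refine (hball ?_).1.2
    rw [Real.dist_eq]
    rw [abs_lt]; constructor <;> linarith
  linarith

/-- Mean value bound. -/
lemma mvt_abs_bound {f f' : ℝ → ℝ} {a b M : ℝ} (hab : a < b)
    (hc : ContinuousOn f (Icc a b)) (hd : ∀ x ∈ Ioo a b, HasDerivAt f (f' x) x)
    (hM : ∀ x ∈ Ioo a b, |f' x| ≤ M) : |f b - f a| ≤ M * (b - a) := by
  obtain ⟨c, hc', hceq⟩ := exists_hasDerivAt_eq_slope f f' hab hc hd
  have hba : (0:ℝ) < b - a := by linarith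
  have : f b - f a = f' c * (b - a) := by
    rw [hceq]; field_simp
  rw [this, abs_mul, abs_of_pos hba]
  exact mul_le_mul_of_nonneg_right (hM c hc') hba.le

/-- `sin (π t) ≥ 2 min(t, 1-t)` on `[0,1]`. -/
lemma sin_ge_two_min {t : ℝ} (h0 : 0 ≤ t) (h1 : t ≤ 1) :
    2 * min t (1 - t) ≤ Real.sin (π * t) := by
  have hcc := strictConcaveOn_sin_Icc.concaveOn
  rcases le_total t (1/2) with h | h
  · have key := hcc.2 (show (0:ℝ) ∈ Icc 0 π from ⟨le_rfl, pi_pos.le⟩)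
      (show π / 2 ∈ Icc 0 π from ⟨pi_div_two_pos.le, half_le_self pi_pos.le⟩)
      (show (0:ℝ) ≤ 1 - 2 * t by linarith) (show (0:ℝ) ≤ 2 * t by linarith)
      (show (1 - 2 * t) + 2 * t = 1 by ring)
    simp only [smul_eq_mul, mul_zero, Real.sin_zero, Real.sin_pi_div_two, mul_one] at key
    rw [show (0:ℝ) + 2 * t * (π / 2) = π * t by ring] at key
    have := min_le_left t (1 - t)
    linarith
  · have key := hcc.2 (show π / 2 ∈ Icc 0 π from ⟨pi_div_two_pos.le, half_le_self pi_pos.le⟩)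
      (show π ∈ Icc 0 π from ⟨pi_pos.le, le_rfl⟩)
      (show (0:ℝ) ≤ 2 - 2 * t by linarith) (show (0:ℝ) ≤ 2 * t - 1 by linarith)
      (show (2 - 2 * t) + (2 * t - 1) = 1 by ring)
    simp only [smul_eq_mul, Real.sin_pi, mul_zero, Real.sin_pi_div_two, mul_one] at key
    rw [show (2 - 2 * t) * (π / 2) + (2 * t - 1) * π = π * t by ring] at key
    have := min_le_right t (1 - t)
    linarith


lemma slice_hasDerivAt_x' {F : ℝ × ℝ → ℝ} {O : Set (ℝ × ℝ)} (hO : IsOpen O)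
    (hF : DifferentiableOn ℝ F O) {t y : ℝ} (h : (t, y) ∈ O) :
    HasDerivAt (fun y' => F (t, y')) (pdX F (t, y)) y := by
  have hd : DifferentiableAt ℝ F (t, y) := hF.differentiableAt (hO.mem_nhds h)
  have hc : DifferentiableAt ℝ (fun y' : ℝ => ((t, y') : ℝ × ℝ)) y :=
    (differentiableAt_const t).prodMk differentiableAt_id
  have : DifferentiableAt ℝ (fun y' => F (t, y')) y := hd.comp y hc
  exact this.hasDerivAt

lemma slice_hasDerivAt_t' {F : ℝ × ℝ → ℝ} {O : Set (ℝ × ℝ)} (hO : IsOpen O)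
    (hF : DifferentiableOn ℝ F O) {t y : ℝ} (h : (t, y) ∈ O) :
    HasDerivAt (fun t' => F (t', y)) (pdT F (t, y)) t := by
  have hd : DifferentiableAt ℝ F (t, y) := hF.differentiableAt (hO.mem_nhds h)
  have hc : DifferentiableAt ℝ (fun t' : ℝ => ((t', y) : ℝ × ℝ)) t :=
    differentiableAt_id.prodMk (differentiableAt_const y)
  have : DifferentiableAt ℝ (fun t' => F (t', y)) t := hd.comp t hc
  exact this.hasDerivAt

lemma slice2_x' {F : ℝ × ℝ → ℝ} {O : Set (ℝ × ℝ)} (hO : IsOpen O)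
    (hF : ContDiffOn ℝ 5 F O) {t y : ℝ} (h : (t, y) ∈ O) :
    HasDerivAt (fun y' => pdX F (t, y')) (pdX (pdX F) (t, y)) y := by
  have hI : IsOpen {s : ℝ | (t, s) ∈ O} :=
    hO.preimage (by continuity : Continuous fun s : ℝ => ((t, s) : ℝ × ℝ))
  have hgI : ContDiffOn ℝ 5 (fun s => F (t, s)) {s : ℝ | (t, s) ∈ O} :=
    hF.comp ((contDiff_const.prodMk contDiff_id).contDiffOn) (fun s hs => hs)
  have hg' : ContDiffOn ℝ 4 (deriv (fun s => F (t, s))) {s : ℝ | (t, s) ∈ O} :=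
    hgI.deriv_of_isOpen hI (by norm_num)
  have : DifferentiableAt ℝ (deriv (fun s => F (t, s))) y :=
    (hg'.differentiableOn (by norm_num)).differentiableAt (hI.mem_nhds h)
  exact this.hasDerivAt

lemma slice2_t' {F : ℝ × ℝ → ℝ} {O : Set (ℝ × ℝ)} (hO : IsOpen O)
    (hF : ContDiffOn ℝ 5 F O) {t y : ℝ} (h : (t, y) ∈ O) :
    HasDerivAt (fun t' => pdT F (t', y)) (pdT (pdT F) (t, y)) t := by
  have hI : IsOpen {s : ℝ | (s, y) ∈ O} :=
    hO.preimage (by continuity : Continuous fun s : ℝ => ((s, y) : ℝ × ℝ))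
  have hgI : ContDiffOn ℝ 5 (fun s => F (s, y)) {s : ℝ | (s, y) ∈ O} :=
    hF.comp ((contDiff_id.prodMk contDiff_const).contDiffOn) (fun s hs => hs)
  have hg' : ContDiffOn ℝ 4 (deriv (fun s => F (s, y))) {s : ℝ | (s, y) ∈ O} :=
    hgI.deriv_of_isOpen hI (by norm_num)
  have : DifferentiableAt ℝ (deriv (fun s => F (s, y))) t :=
    (hg'.differentiableOn (by norm_num)).differentiableAt (hI.mem_nhds h)
  exact this.hasDerivAt

set_option maxHeartbeats 2000000 in
lemma no_interior_min (ε B L μ x₀ s : ℝ) (F₁ F₂ : ℝ × ℝ → ℝ) (O Q S : Set (ℝ × ℝ))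
    (hO : IsOpen O) (hQ : IsOpen Q) (hQO : Q ⊆ O) (hQS : Q ⊆ S)
    (hε : 0 < ε) (hB : 0 < B) (hL : 1 ≤ L) (hμpos : 0 < μ) (hμ1 : μ ≤ 1)
    (hμsmall : μ * (ε⁻¹ ^ 4 + 4 * B * ε⁻¹ ^ 11) ≤ 1 / 2)
    (hd1 : DifferentiableOn ℝ F₁ O) (hd2 : DifferentiableOn ℝ F₂ O)
    (hC1 : ContDiffOn ℝ 5 F₁ O) (hC2 : ContDiffOn ℝ 5 F₂ O)
    (hE1 : SatisfiesE F₁ O) (hE2 : SatisfiesE F₂ O)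
    (ha : ∀ q ∈ O, -ε⁻¹ < pdX F₁ q ∧ pdX F₁ q < -ε)
    (hbb : ∀ q ∈ O, -ε⁻¹ < pdX F₂ q ∧ pdX F₂ q < -ε)
    (hX2 : ∀ q ∈ O, |pdX (pdX F₂) q| ≤ B / L)
    (p : ℝ × ℝ) (hp : p ∈ Q) (hp0 : 0 < p.1) (hp1 : p.1 < 1)
    (hmin : IsMinOn (fun q : ℝ × ℝ =>
        B * (Real.exp (μ * (q.2 - x₀ - s)) + Real.exp (-(μ * (q.2 - x₀ + s)))) *
          Real.sin (π * q.1) - F₁ q + F₂ q) S p) : False := by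
  obtain ⟨tb, xb⟩ := p
  simp only at hp0 hp1
  have hpO : (tb, xb) ∈ O := hQO hp
  have hsin : 0 < Real.sin (π * tb) :=
    Real.sin_pos_of_pos_of_lt_pi (mul_pos pi_pos hp0) (mul_lt_of_lt_one_right pi_pos hp1)
  have he1pos : 0 < Real.exp (μ * (xb - x₀ - s)) := Real.exp_pos _
  have he2pos : 0 < Real.exp (-(μ * (xb - x₀ + s))) := Real.exp_pos _
  -- x-direction
  have hQx : IsOpen {y : ℝ | (tb, y) ∈ Q} :=
    hQ.preimage (by continuity : Continuous fun y : ℝ => ((tb, y) : ℝ × ℝ))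
  have hQxmem : xb ∈ {y : ℝ | (tb, y) ∈ Q} := hp
  have hwx : ∀ y : ℝ, HasDerivAt
      (fun y' => B * (Real.exp (μ * (y' - x₀ - s)) + Real.exp (-(μ * (y' - x₀ + s)))) *
        Real.sin (π * tb))
      (B * (μ * Real.exp (μ * (y - x₀ - s)) - μ * Real.exp (-(μ * (y - x₀ + s)))) *
        Real.sin (π * tb)) y := by
    intro y
    have h1 : HasDerivAt (fun y' : ℝ => μ * (y' - x₀ - s)) (μ * 1) y :=
      (((hasDerivAt_id y).sub_const x₀).sub_const s).const_mul μ
    have h2 : HasDerivAt (fun y' : ℝ => -(μ * (y' - x₀ + s))) (-(μ * 1)) y :=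
      ((((hasDerivAt_id y).sub_const x₀).add_const s).const_mul μ).neg
    have := ((h1.exp.add h2.exp).const_mul B).mul_const (Real.sin (π * tb))
    refine this.congr_deriv ?_
    ring
  have hwxx : HasDerivAt
      (fun y => B * (μ * Real.exp (μ * (y - x₀ - s)) - μ * Real.exp (-(μ * (y - x₀ + s)))) *
        Real.sin (π * tb))
      (μ ^ 2 * (B * (Real.exp (μ * (xb - x₀ - s)) + Real.exp (-(μ * (xb - x₀ + s)))) *
        Real.sin (π * tb))) xb := by
    have h1 : HasDerivAt (fun y' : ℝ => μ * (y' - x₀ - s)) (μ * 1) xb :=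
      (((hasDerivAt_id xb).sub_const x₀).sub_const s).const_mul μ
    have h2 : HasDerivAt (fun y' : ℝ => -(μ * (y' - x₀ + s))) (-(μ * 1)) xb :=
      ((((hasDerivAt_id xb).sub_const x₀).add_const s).const_mul μ).neg
    have := (((h1.exp.const_mul μ).sub (h2.exp.const_mul μ)).const_mul B).mul_const
      (Real.sin (π * tb))
    refine this.congr_deriv ?_
    ring
  have hfgx : ∀ᶠ y in 𝓝 xb, HasDerivAt
      (fun y' => B * (Real.exp (μ * (y' - x₀ - s)) + Real.exp (-(μ * (y' - x₀ + s)))) *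
        Real.sin (π * tb) - F₁ (tb, y') + F₂ (tb, y'))
      (B * (μ * Real.exp (μ * (y - x₀ - s)) - μ * Real.exp (-(μ * (y - x₀ + s)))) *
        Real.sin (π * tb) - pdX F₁ (tb, y) + pdX F₂ (tb, y)) y := by
    filter_upwards [hQx.mem_nhds hQxmem] with y hy
    exact ((hwx y).sub (slice_hasDerivAt_x' hO hd1 (hQO hy))).add
      (slice_hasDerivAt_x' hO hd2 (hQO hy))
  have hgx : HasDerivAt
      (fun y => B * (μ * Real.exp (μ * (y - x₀ - s)) - μ * Real.exp (-(μ * (y - x₀ + s)))) *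
        Real.sin (π * tb) - pdX F₁ (tb, y) + pdX F₂ (tb, y))
      (μ ^ 2 * (B * (Real.exp (μ * (xb - x₀ - s)) + Real.exp (-(μ * (xb - x₀ + s)))) *
        Real.sin (π * tb)) - pdX (pdX F₁) (tb, xb) + pdX (pdX F₂) (tb, xb)) xb :=
    (hwxx.sub (slice2_x' hO hC1 hpO)).add (slice2_x' hO hC2 hpO)
  have hminx : IsLocalMin
      (fun y' => B * (Real.exp (μ * (y' - x₀ - s)) + Real.exp (-(μ * (y' - x₀ + s)))) *
        Real.sin (π * tb) - F₁ (tb, y') + F₂ (tb, y')) xb := by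
    filter_upwards [hQx.mem_nhds hQxmem] with y hy
    exact isMinOn_iff.mp hmin (tb, y) (hQS hy)
  have h2 : 0 ≤ μ ^ 2 * (B * (Real.exp (μ * (xb - x₀ - s)) + Real.exp (-(μ * (xb - x₀ + s)))) *
      Real.sin (π * tb)) - pdX (pdX F₁) (tb, xb) + pdX (pdX F₂) (tb, xb) :=
    second_deriv_test_aux hminx hfgx hgx
  have hD0 : B * (μ * Real.exp (μ * (xb - x₀ - s)) - μ * Real.exp (-(μ * (xb - x₀ + s)))) *
      Real.sin (π * tb) - pdX F₁ (tb, xb) + pdX F₂ (tb, xb) = 0 :=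
    hminx.hasDerivAt_eq_zero hfgx.self_of_nhds
  -- t-direction
  have hQt : IsOpen {σ : ℝ | (σ, xb) ∈ Q} :=
    hQ.preimage (by continuity : Continuous fun σ : ℝ => ((σ, xb) : ℝ × ℝ))
  have hQtmem : tb ∈ {σ : ℝ | (σ, xb) ∈ Q} := hp
  have hwt : ∀ σ : ℝ, HasDerivAt
      (fun σ' => B * (Real.exp (μ * (xb - x₀ - s)) + Real.exp (-(μ * (xb - x₀ + s)))) *
        Real.sin (π * σ'))
      (B * (Real.exp (μ * (xb - x₀ - s)) + Real.exp (-(μ * (xb - x₀ + s)))) *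
        (Real.cos (π * σ) * (π * 1))) σ := by
    intro σ
    exact (((hasDerivAt_id σ).const_mul π).sin).const_mul _
  have hwtt : HasDerivAt
      (fun σ => B * (Real.exp (μ * (xb - x₀ - s)) + Real.exp (-(μ * (xb - x₀ + s)))) *
        (Real.cos (π * σ) * (π * 1)))
      (-(π ^ 2) * (B * (Real.exp (μ * (xb - x₀ - s)) + Real.exp (-(μ * (xb - x₀ + s)))) *
        Real.sin (π * tb))) tb := by
    have := ((((hasDerivAt_id tb).const_mul π).cos).mul_const (π * 1)).const_mul
      (B * (Real.exp (μ * (xb - x₀ - s)) + Real.exp (-(μ * (xb - x₀ + s)))))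
    simp only [id_eq] at this
    refine this.congr_deriv ?_
    ring
  have hfgt : ∀ᶠ σ in 𝓝 tb, HasDerivAt
      (fun σ' => B * (Real.exp (μ * (xb - x₀ - s)) + Real.exp (-(μ * (xb - x₀ + s)))) *
        Real.sin (π * σ') - F₁ (σ', xb) + F₂ (σ', xb))
      (B * (Real.exp (μ * (xb - x₀ - s)) + Real.exp (-(μ * (xb - x₀ + s)))) *
        (Real.cos (π * σ) * (π * 1)) - pdT F₁ (σ, xb) + pdT F₂ (σ, xb)) σ := by
    filter_upwards [hQt.mem_nhds hQtmem] with σ hσ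
    exact ((hwt σ).sub (slice_hasDerivAt_t' hO hd1 (hQO hσ))).add
      (slice_hasDerivAt_t' hO hd2 (hQO hσ))
  have hgt : HasDerivAt
      (fun σ => B * (Real.exp (μ * (xb - x₀ - s)) + Real.exp (-(μ * (xb - x₀ + s)))) *
        (Real.cos (π * σ) * (π * 1)) - pdT F₁ (σ, xb) + pdT F₂ (σ, xb))
      (-(π ^ 2) * (B * (Real.exp (μ * (xb - x₀ - s)) + Real.exp (-(μ * (xb - x₀ + s)))) *
        Real.sin (π * tb)) - pdT (pdT F₁) (tb, xb) + pdT (pdT F₂) (tb, xb)) tb :=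
    (hwtt.sub (slice2_t' hO hC1 hpO)).add (slice2_t' hO hC2 hpO)
  have hmint : IsLocalMin
      (fun σ' => B * (Real.exp (μ * (xb - x₀ - s)) + Real.exp (-(μ * (xb - x₀ + s)))) *
        Real.sin (π * σ') - F₁ (σ', xb) + F₂ (σ', xb)) tb := by
    filter_upwards [hQt.mem_nhds hQtmem] with σ hσ
    exact isMinOn_iff.mp hmin (σ, xb) (hQS hσ)
  have h1 : 0 ≤ -(π ^ 2) * (B * (Real.exp (μ * (xb - x₀ - s)) +
      Real.exp (-(μ * (xb - x₀ + s)))) * Real.sin (π * tb)) -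
      pdT (pdT F₁) (tb, xb) + pdT (pdT F₂) (tb, xb) :=
    second_deriv_test_aux hmint hfgt hgt
  -- now pure algebra
  obtain ⟨ha1, ha2⟩ := ha (tb, xb) hpO
  obtain ⟨hb1, hb2⟩ := hbb (tb, xb) hpO
  have heq1 := (hE1 (tb, xb) hpO).2
  have heq2 := (hE2 (tb, xb) hpO).2
  have ha0 : pdX F₁ (tb, xb) ≠ 0 := (hE1 (tb, xb) hpO).1
  have hb0 : pdX F₂ (tb, xb) ≠ 0 := (hE2 (tb, xb) hpO).1
  have hX2b : |pdX (pdX F₂) (tb, xb)| ≤ B := by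
    refine le_trans (hX2 (tb, xb) hpO) ?_
    rw [div_le_iff₀ (by linarith)]
    exact le_mul_of_one_le_right (by linarith) hL
  clear hmin hfgx hfgt hminx hmint hgx hgt hwxx hwtt hQx hQt hQxmem hQtmem hwx hwt
  set e₁ := Real.exp (μ * (xb - x₀ - s)) with he₁
  set e₂ := Real.exp (-(μ * (xb - x₀ + s))) with he₂
  set a := pdX F₁ (tb, xb) with ha'
  set b := pdX F₂ (tb, xb) with hb'
  set X₁ := pdX (pdX F₁) (tb, xb) with hX₁'
  set X₂ := pdX (pdX F₂) (tb, xb) with hX₂'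
  set T₁ := pdT (pdT F₁) (tb, xb) with hT₁'
  set T₂ := pdT (pdT F₂) (tb, xb) with hT₂'
  set W := B * (e₁ + e₂) * Real.sin (π * tb) with hW'
  clear_value a b X₁ X₂ T₁ T₂
  have hWpos : 0 < W := by
    have : 0 < e₁ + e₂ := by linarith
    exact mul_pos (mul_pos hB this) hsin
  clear_value e₁ e₂ W
  clear he₁ he₂ ha' hb' hX₁' hX₂' hT₁' hT₂'
  have hεi : 0 < ε⁻¹ := inv_pos.mpr hε
  have ha4 : ε ^ 4 ≤ a ^ 4 := by
    have h4 : ε ^ 4 ≤ (-a) ^ 4 := pow_le_pow_left₀ hε.le (by linarith) 4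
    linarith [h4, sq_nonneg a]
  have hb4 : ε ^ 4 ≤ b ^ 4 := by
    have h4 : ε ^ 4 ≤ (-b) ^ 4 := pow_le_pow_left₀ hε.le (by linarith) 4
    linarith [h4, sq_nonneg b]
  have hε4pos : 0 < ε ^ 4 := pow_pos hε 4
  have ha4pos : 0 < a ^ 4 := lt_of_lt_of_le hε4pos ha4
  have hb4pos : 0 < b ^ 4 := lt_of_lt_of_le hε4pos hb4
  have hiapos : 0 < (a ^ 4)⁻¹ := inv_pos.mpr ha4pos
  have hibpos : 0 < (b ^ 4)⁻¹ := inv_pos.mpr hb4pos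
  have hiale : (a ^ 4)⁻¹ ≤ ε⁻¹ ^ 4 := by
    rw [inv_pow]
    exact inv_anti₀ hε4pos ha4
  have hible : (b ^ 4)⁻¹ ≤ ε⁻¹ ^ 4 := by
    rw [inv_pow]
    exact inv_anti₀ hε4pos hb4
  -- bound on a - b
  have habD : a - b = B * (μ * e₁ - μ * e₂) * Real.sin (π * tb) := by linarith
  have habs_ab : |a - b| ≤ μ * W := by
    rw [habD, abs_le]
    constructor
    · have : B * (μ * e₁ - μ * e₂) * Real.sin (π * tb) + μ * W =
          2 * μ * e₁ * B * Real.sin (π * tb) := by rw [hW']; ring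
      linarith [this, mul_pos (mul_pos (mul_pos (mul_pos (by norm_num : (0:ℝ) < 2) hμpos) he1pos) hB) hsin]
    · have : μ * W - B * (μ * e₁ - μ * e₂) * Real.sin (π * tb) =
          2 * μ * e₂ * B * Real.sin (π * tb) := by rw [hW']; ring
      linarith [this, mul_pos (mul_pos (mul_pos (mul_pos (by norm_num : (0:ℝ) < 2) hμpos) he2pos) hB) hsin]
  -- cubic bound
  have haL : -ε⁻¹ ≤ a := ha1.le
  have haU : a ≤ 0 := by linarith
  have hbL : -ε⁻¹ ≤ b := hb1.le
  have hbU : b ≤ 0 := by linarith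
  have hcube : |b ^ 3 + b ^ 2 * a + b * a ^ 2 + a ^ 3| ≤ 4 * ε⁻¹ ^ 3 := by
    have c1 : (-b) ^ 3 ≤ ε⁻¹ ^ 3 := pow_le_pow_left₀ (by linarith) (by linarith) 3
    have c2 : (-a) ^ 3 ≤ ε⁻¹ ^ 3 := pow_le_pow_left₀ (by linarith) (by linarith) 3
    have c3 : b ^ 2 ≤ ε⁻¹ ^ 2 := by
      have h4 : (-b) ^ 2 ≤ ε⁻¹ ^ 2 := pow_le_pow_left₀ (by linarith) (by linarith) 2
      linarith [h4]
    have c4 : a ^ 2 ≤ ε⁻¹ ^ 2 := by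
      have h4 : (-a) ^ 2 ≤ ε⁻¹ ^ 2 := pow_le_pow_left₀ (by linarith) (by linarith) 2
      linarith [h4]
    have t1 : 0 ≤ b ^ 2 * (-b) := mul_nonneg (sq_nonneg b) (by linarith)
    have t2 : 0 ≤ b ^ 2 * (-a) := mul_nonneg (sq_nonneg b) (by linarith)
    have t3 : 0 ≤ a ^ 2 * (-b) := mul_nonneg (sq_nonneg a) (by linarith)
    have t4 : 0 ≤ a ^ 2 * (-a) := mul_nonneg (sq_nonneg a) (by linarith)
    have hε3 : 0 < ε⁻¹ ^ 3 := pow_pos hεi 3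
    have s2a : b ^ 2 * (-a) ≤ b ^ 2 * ε⁻¹ :=
      mul_le_mul_of_nonneg_left (by linarith) (sq_nonneg b)
    have s2b : b ^ 2 * ε⁻¹ ≤ ε⁻¹ ^ 2 * ε⁻¹ := mul_le_mul_of_nonneg_right c3 hεi.le
    have s3a : a ^ 2 * (-b) ≤ a ^ 2 * ε⁻¹ :=
      mul_le_mul_of_nonneg_left (by linarith) (sq_nonneg a)
    have s3b : a ^ 2 * ε⁻¹ ≤ ε⁻¹ ^ 2 * ε⁻¹ := mul_le_mul_of_nonneg_right c4 hεi.le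
    rw [abs_le]
    constructor
    · linarith [c1, c2, s2a, s2b, s3a, s3b]
    · linarith [t1, t2, t3, t4, hε3]
  -- difference of inverses
  have hinvdiff : (a ^ 4)⁻¹ - (b ^ 4)⁻¹ = (b ^ 4 - a ^ 4) * ((a ^ 4)⁻¹ * (b ^ 4)⁻¹) := by
    field_simp
  have hb4a4 : |b ^ 4 - a ^ 4| ≤ |a - b| * (4 * ε⁻¹ ^ 3) := by
    have : b ^ 4 - a ^ 4 = (b - a) * (b ^ 3 + b ^ 2 * a + b * a ^ 2 + a ^ 3) := by ring
    rw [this, abs_mul, abs_sub_comm]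
    exact mul_le_mul_of_nonneg_left hcube (abs_nonneg _)
  have hinvbound : |(a ^ 4)⁻¹ - (b ^ 4)⁻¹| ≤ (μ * W) * (4 * ε⁻¹ ^ 3) * (ε⁻¹ ^ 4 * ε⁻¹ ^ 4) := by
    rw [hinvdiff, abs_mul, abs_of_pos (mul_pos hiapos hibpos)]
    have h1' : |b ^ 4 - a ^ 4| ≤ (μ * W) * (4 * ε⁻¹ ^ 3) := by
      refine le_trans hb4a4 ?_
      exact mul_le_mul_of_nonneg_right habs_ab (by positivity)
    have h2' : (a ^ 4)⁻¹ * (b ^ 4)⁻¹ ≤ ε⁻¹ ^ 4 * ε⁻¹ ^ 4 :=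
      mul_le_mul hiale hible hibpos.le (by positivity)
    exact mul_le_mul h1' h2' (by positivity) (by positivity)
  -- combine
  have step1 : 0 ≤ -(π ^ 2) * W + π ^ 2 * (a ^ 4)⁻¹ * X₁ - π ^ 2 * (b ^ 4)⁻¹ * X₂ := by
    linarith [h1, heq1, heq2]
  have step2 : 0 ≤ π ^ 2 * (a ^ 4)⁻¹ * (μ ^ 2 * W - X₁ + X₂) := by
    apply mul_nonneg (by positivity) h2
  have step2' : π ^ 2 * (a ^ 4)⁻¹ * (μ ^ 2 * W - X₁ + X₂) =
      π ^ 2 * ((a ^ 4)⁻¹ * μ ^ 2 * W) - π ^ 2 * (a ^ 4)⁻¹ * X₁ + π ^ 2 * (a ^ 4)⁻¹ * X₂ := by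
    ring
  have step3 : 0 ≤ π ^ 2 * (-W + (a ^ 4)⁻¹ * μ ^ 2 * W + ((a ^ 4)⁻¹ - (b ^ 4)⁻¹) * X₂) := by
    rw [step2'] at step2
    linarith [step1, step2]
  have hπ2 : 0 < π ^ 2 := by positivity
  have step4 : 0 ≤ -W + (a ^ 4)⁻¹ * μ ^ 2 * W + ((a ^ 4)⁻¹ - (b ^ 4)⁻¹) * X₂ :=
    nonneg_of_mul_nonneg_right (by linarith [step3]) hπ2
  have h5 : (a ^ 4)⁻¹ * μ ^ 2 * W ≤ ε⁻¹ ^ 4 * μ * W := by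
    have hμ2 : μ ^ 2 ≤ μ := by
      have := mul_le_mul_of_nonneg_left hμ1 hμpos.le
      linarith [this]
    have : (a ^ 4)⁻¹ * μ ^ 2 ≤ ε⁻¹ ^ 4 * μ :=
      mul_le_mul hiale hμ2 (by positivity) (by positivity)
    exact mul_le_mul_of_nonneg_right this hWpos.le
  have h6 : ((a ^ 4)⁻¹ - (b ^ 4)⁻¹) * X₂ ≤ (μ * W) * (4 * ε⁻¹ ^ 3) * (ε⁻¹ ^ 4 * ε⁻¹ ^ 4) * B := by
    refine le_trans (le_abs_self _) ?_
    rw [abs_mul]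
    exact mul_le_mul hinvbound hX2b (abs_nonneg _) (by positivity)
  have hWμ : W * (μ * (ε⁻¹ ^ 4 + 4 * B * ε⁻¹ ^ 11)) ≤ W * (1 / 2) :=
    mul_le_mul_of_nonneg_left hμsmall hWpos.le
  linarith [step4, h5, h6, hWμ, hWpos]

set_option maxHeartbeats 2000000 in
lemma key_estimate (ε B L L₀ : ℝ) (hε : 0 < ε) (hB : 1 < B) (hL : 1 < L)
    (F₁ F₂ : ℝ × ℝ → ℝ) (t₀ x₀ : ℝ)
    (hA1 : AdmE ε F₁ (rect11 L₀)) (hA2 : AdmE ε F₂ (rect11 L₀))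
    (hC1 : ContDiffOn ℝ 5 F₁ (closure (rect11 L₀)))
    (hC2 : ContDiffOn ℝ 5 F₂ (closure (rect11 L₀)))
    (hE1 : SatisfiesE F₁ (rect11 L₀)) (hE2 : SatisfiesE F₂ (rect11 L₀))
    (hz : (t₀, x₀) ∈ rect11 L₀)
    (hIcc : Icc (x₀ - 2 * Real.sqrt L) (x₀ + 2 * Real.sqrt L) ⊆ Ioo (-L₀) L₀)
    (hg1 : ∀ w ∈ rect11 L₀, Real.sqrt ((pdT F₁ w) ^ 2 + (pdX F₁ w) ^ 2) ≤ B)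
    (hg2 : ∀ w ∈ rect11 L₀, Real.sqrt ((pdT F₂ w) ^ 2 + (pdX F₂ w) ^ 2) ≤ B)
    (hXX2 : ∀ w ∈ rect11 L₀, |pdX (pdX F₂) w| ≤ B / L)
    (hbd : ∀ w ∈ frontier (rect11 L₀),
        Real.sqrt ((w.1 - t₀) ^ 2 + (w.2 - x₀) ^ 2) ≤ 2 * Real.sqrt L → F₁ w = F₂ w) :
    F₁ (t₀, x₀) - F₂ (t₀, x₀) ≤
      2 * B * Real.exp (-(1 / (2 * (1 + ε⁻¹ ^ 4 + 4 * B * ε⁻¹ ^ 11))) * Real.sqrt (4 * L - 1)) := by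
  have hεi : 0 < ε⁻¹ := inv_pos.mpr hε
  have hp4' : (0:ℝ) < ε⁻¹ ^ 4 := pow_pos hεi 4
  have hp11' : (0:ℝ) < ε⁻¹ ^ 11 := pow_pos hεi 11
  have hp11B : (0:ℝ) < 4 * B * ε⁻¹ ^ 11 :=
    mul_pos (by linarith : (0:ℝ) < 4 * B) hp11'
  have hden : (0:ℝ) < 1 + ε⁻¹ ^ 4 + 4 * B * ε⁻¹ ^ 11 := by linarith
  set μ := 1 / (2 * (1 + ε⁻¹ ^ 4 + 4 * B * ε⁻¹ ^ 11)) with hμdef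
  set s := Real.sqrt (4 * L - 1) with hsdef
  have hμpos : 0 < μ := by rw [hμdef]; exact div_pos one_pos (by linarith)
  have hμ1 : μ ≤ 1 := by
    rw [hμdef, div_le_one (by linarith)]
    linarith
  have hμsmall : μ * (ε⁻¹ ^ 4 + 4 * B * ε⁻¹ ^ 11) ≤ 1 / 2 := by
    rw [hμdef, div_mul_eq_mul_div, one_mul, div_le_iff₀ (by linarith)]
    linarith
  have hs1 : 1 ≤ s := by
    have h := Real.sqrt_le_sqrt (show (1:ℝ) ≤ 4 * L - 1 by linarith)
    rwa [Real.sqrt_one] at h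
  have hs0 : 0 < s := by linarith
  have hssq : s ^ 2 = 4 * L - 1 := Real.sq_sqrt (by linarith)
  have h4L : Real.sqrt (4 * L) = 2 * Real.sqrt L := by
    rw [show (4:ℝ) * L = 2 ^ 2 * L by ring, Real.sqrt_mul (by positivity) L,
      Real.sqrt_sq (by norm_num : (0:ℝ) ≤ 2)]
  have hsle : s ≤ 2 * Real.sqrt L := by
    rw [← h4L, hsdef]
    exact Real.sqrt_le_sqrt (by linarith)
  have hz' : t₀ ∈ Ioo (0:ℝ) 1 ∧ x₀ ∈ Ioo (-L₀) L₀ := hz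
  obtain ⟨hzt, hzx⟩ := hz'
  have hL₀pos : 0 < L₀ := by
    rcases hzx with ⟨h1', h2'⟩; linarith
  have hOopen : IsOpen (rect11 L₀) := IsOpen.prod isOpen_Ioo isOpen_Ioo
  have hclO : closure (rect11 L₀) = Icc 0 1 ×ˢ Icc (-L₀) L₀ := by
    rw [rect11, closure_prod_eq, closure_Ioo (by norm_num : (0:ℝ) ≠ 1),
      closure_Ioo (ne_of_lt (by linarith : -L₀ < L₀))]
  have hxsub : Icc (x₀ - s) (x₀ + s) ⊆ Ioo (-L₀) L₀ := by
    intro x hx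
    exact hIcc ⟨by linarith [hx.1], by linarith [hx.2]⟩
  -- boundary equality on top/bottom of the small rectangle
  have hu0 : ∀ τ x', (τ = 0 ∨ τ = 1) → x' ∈ Icc (x₀ - s) (x₀ + s) →
      F₁ (τ, x') = F₂ (τ, x') := by
    intro τ x' hτ hx'
    have hfront : (τ, x') ∈ frontier (rect11 L₀) := by
      rw [rect11, frontier_prod_eq]
      refine Set.mem_union_right _ ?_
      constructor
      · rw [frontier_Ioo (by norm_num : (0:ℝ) < 1)]
        rcases hτ with h | h <;> simp [h]
      · rw [closure_Ioo (ne_of_lt (by linarith : -L₀ < L₀))]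
        exact Ioo_subset_Icc_self (hxsub hx')
    refine hbd (τ, x') hfront ?_
    have h1 : ((τ, x').1 - t₀) ^ 2 ≤ 1 := by
      rcases hτ with h | h <;> simp only [h] <;> nlinarith [hzt.1, hzt.2]
    have h2 : ((τ, x').2 - x₀) ^ 2 ≤ s ^ 2 := by
      simp only
      nlinarith [hx'.1, hx'.2]
    calc Real.sqrt (((τ, x').1 - t₀) ^ 2 + ((τ, x').2 - x₀) ^ 2)
        ≤ Real.sqrt (4 * L) := Real.sqrt_le_sqrt (by nlinarith)
      _ = 2 * Real.sqrt L := h4L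
  -- gradient bound in t direction
  have hTB : ∀ (G : ℝ × ℝ → ℝ),
      (∀ w ∈ rect11 L₀, Real.sqrt ((pdT G w) ^ 2 + (pdX G w) ^ 2) ≤ B) →
      ∀ w ∈ rect11 L₀, |pdT G w| ≤ B := by
    intro G hg w hw
    have h1 := hg w hw
    have h2 : |pdT G w| = Real.sqrt ((pdT G w) ^ 2) := (Real.sqrt_sq_eq_abs _).symm
    rw [h2]
    exact le_trans (Real.sqrt_le_sqrt (by nlinarith [sq_nonneg (pdX G w)])) h1
  -- the vertical-sides estimate
  have hvert : ∀ t x', t ∈ Ioo (0:ℝ) 1 → x' ∈ Icc (x₀ - s) (x₀ + s) →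
      |F₁ (t, x') - F₂ (t, x')| ≤ B * Real.sin (π * t) := by
    intro t x' ht hx'
    have hx'O : x' ∈ Ioo (-L₀) L₀ := hxsub hx'
    have low : ∀ (G : ℝ × ℝ → ℝ), ContinuousOn G (closure (rect11 L₀)) →
        DifferentiableOn ℝ G (rect11 L₀) → (∀ w ∈ rect11 L₀, |pdT G w| ≤ B) →
        |G (t, x') - G (0, x')| ≤ B * t ∧ |G (1, x') - G (t, x')| ≤ B * (1 - t) := by
      intro G hGc hGd hGB
      have hcont : ∀ u v' : ℝ, u ≤ v' → (0:ℝ) ≤ u → v' ≤ 1 →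
          ContinuousOn (fun σ => G (σ, x')) (Icc u v') := by
        intro u v' _ hu hv'
        refine hGc.comp ((continuous_id.prodMk continuous_const).continuousOn) ?_
        intro σ hσ
        rw [hclO]
        exact ⟨⟨le_trans hu hσ.1, le_trans hσ.2 hv'⟩, Ioo_subset_Icc_self hx'O⟩
      have hderiv : ∀ σ ∈ Ioo (0:ℝ) 1,
          HasDerivAt (fun σ' => G (σ', x')) (pdT G (σ, x')) σ := by
        intro σ hσ
        exact slice_hasDerivAt_t' hOopen hGd ⟨hσ, hx'O⟩
      constructor
      · have := mvt_abs_bound (f := fun σ => G (σ, x')) (f' := fun σ => pdT G (σ, x'))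
          ht.1 (hcont 0 t ht.1.le le_rfl ht.2.le)
          (fun σ hσ => hderiv σ ⟨hσ.1, lt_trans hσ.2 ht.2⟩)
          (fun σ hσ => hGB (σ, x') ⟨⟨hσ.1, lt_trans hσ.2 ht.2⟩, hx'O⟩)
        simpa using this
      · have := mvt_abs_bound (f := fun σ => G (σ, x')) (f' := fun σ => pdT G (σ, x'))
          ht.2 (hcont t 1 ht.2.le ht.1.le le_rfl)
          (fun σ hσ => hderiv σ ⟨lt_trans ht.1 hσ.1, hσ.2⟩)
          (fun σ hσ => hGB (σ, x') ⟨⟨lt_trans ht.1 hσ.1, hσ.2⟩, hx'O⟩)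
        simpa using this
    have e10 : F₁ (0, x') = F₂ (0, x') := hu0 0 x' (Or.inl rfl) hx'
    have e11 : F₁ (1, x') = F₂ (1, x') := hu0 1 x' (Or.inr rfl) hx'
    obtain ⟨l1a, l1b⟩ := low F₁ hA1.1 hA1.2.1 (hTB F₁ hg1)
    obtain ⟨l2a, l2b⟩ := low F₂ hA2.1 hA2.2.1 (hTB F₂ hg2)
    rw [abs_le] at l1a l1b l2a l2b ⊢
    have hsin2 := sin_ge_two_min ht.1.le ht.2.le
    rcases le_total t (1 - t) with hmm | hmm
    · rw [min_eq_left hmm] at hsin2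
      have hBs : B * (2 * t) ≤ B * Real.sin (π * t) :=
        mul_le_mul_of_nonneg_left hsin2 (by linarith)
      constructor <;> linarith [l1a.1, l1a.2, l2a.1, l2a.2, hBs]
    · rw [min_eq_right hmm] at hsin2
      have hBs : B * (2 * (1 - t)) ≤ B * Real.sin (π * t) :=
        mul_le_mul_of_nonneg_left hsin2 (by linarith)
      constructor <;> linarith [l1b.1, l1b.2, l2b.1, l2b.2, hBs]
  -- compactness and minimum
  have hQsub : (Ioo (0:ℝ) 1 ×ˢ Ioo (x₀ - s) (x₀ + s)) ⊆ rect11 L₀ := by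
    intro p hp
    exact ⟨hp.1, hxsub (Ioo_subset_Icc_self hp.2)⟩
  have hSsub : (Icc (0:ℝ) 1 ×ˢ Icc (x₀ - s) (x₀ + s)) ⊆ closure (rect11 L₀) := by
    rw [hclO]
    intro p hp
    exact ⟨hp.1, Ioo_subset_Icc_self (hxsub hp.2)⟩
  have hwcont : Continuous (fun q : ℝ × ℝ =>
      B * (Real.exp (μ * (q.2 - x₀ - s)) + Real.exp (-(μ * (q.2 - x₀ + s)))) *
        Real.sin (π * q.1)) := by fun_prop
  have hvcont : ContinuousOn (fun q : ℝ × ℝ =>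
      B * (Real.exp (μ * (q.2 - x₀ - s)) + Real.exp (-(μ * (q.2 - x₀ + s)))) *
        Real.sin (π * q.1) - F₁ q + F₂ q) (Icc (0:ℝ) 1 ×ˢ Icc (x₀ - s) (x₀ + s)) :=
    ((hwcont.continuousOn).sub (hA1.1.mono hSsub)).add (hA2.1.mono hSsub)
  have hScompact : IsCompact (Icc (0:ℝ) 1 ×ˢ Icc (x₀ - s) (x₀ + s)) :=
    isCompact_Icc.prod isCompact_Icc
  have hzS : ((t₀, x₀) : ℝ × ℝ) ∈ Icc (0:ℝ) 1 ×ˢ Icc (x₀ - s) (x₀ + s) :=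
    ⟨Ioo_subset_Icc_self hzt, ⟨by linarith, by linarith⟩⟩
  obtain ⟨p, hpS, hpmin⟩ := hScompact.exists_isMinOn ⟨(t₀, x₀), hzS⟩ hvcont
  have hp0 : 0 ≤ B * (Real.exp (μ * (p.2 - x₀ - s)) + Real.exp (-(μ * (p.2 - x₀ + s)))) *
      Real.sin (π * p.1) - F₁ p + F₂ p := by
    by_cases hpQ : p ∈ Ioo (0:ℝ) 1 ×ˢ Ioo (x₀ - s) (x₀ + s)
    · exfalso
      refine no_interior_min ε B L μ x₀ s F₁ F₂ (rect11 L₀)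
        (Ioo (0:ℝ) 1 ×ˢ Ioo (x₀ - s) (x₀ + s)) (Icc (0:ℝ) 1 ×ˢ Icc (x₀ - s) (x₀ + s))
        hOopen (IsOpen.prod isOpen_Ioo isOpen_Ioo) hQsub
        (fun q hq => ⟨Ioo_subset_Icc_self hq.1, Ioo_subset_Icc_self hq.2⟩)
        hε (by linarith) hL.le hμpos hμ1 hμsmall hA1.2.1 hA2.2.1
        (hC1.mono subset_closure) (hC2.mono subset_closure) hE1 hE2
        hA1.2.2 hA2.2.2 hXX2 p hpQ hpQ.1.1 hpQ.1.2 hpmin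
    · have hp1S : p.1 ∈ Icc (0:ℝ) 1 := hpS.1
      have hp2S : p.2 ∈ Icc (x₀ - s) (x₀ + s) := hpS.2
      have hwnn : 0 ≤ B * (Real.exp (μ * (p.2 - x₀ - s)) + Real.exp (-(μ * (p.2 - x₀ + s)))) *
          Real.sin (π * p.1) := by
        have hsinn : 0 ≤ Real.sin (π * p.1) :=
          Real.sin_nonneg_of_nonneg_of_le_pi (by nlinarith [pi_pos, hp1S.1])
            (by nlinarith [pi_pos, hp1S.2])
        have he : (0:ℝ) < Real.exp (μ * (p.2 - x₀ - s)) + Real.exp (-(μ * (p.2 - x₀ + s))) := by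
          positivity
        exact mul_nonneg (mul_nonneg (by linarith) he.le) hsinn
      by_cases hcase : p.1 = 0 ∨ p.1 = 1
      · have he := hu0 p.1 p.2 hcase hp2S
        rw [Prod.mk.eta] at he
        linarith [hwnn, he.le, he.ge]
      · push_neg at hcase
        have ht : p.1 ∈ Ioo (0:ℝ) 1 :=
          ⟨lt_of_le_of_ne hp1S.1 (Ne.symm hcase.1), lt_of_le_of_ne hp1S.2 hcase.2⟩
        have hx2 : p.2 = x₀ - s ∨ p.2 = x₀ + s := by
          by_contra hc
          push_neg at hc
          exact hpQ ⟨ht, ⟨lt_of_le_of_ne hp2S.1 (Ne.symm hc.1), lt_of_le_of_ne hp2S.2 hc.2⟩⟩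
        have hub := hvert p.1 p.2 ht hp2S
        rw [Prod.mk.eta] at hub
        rw [abs_le] at hub
        have hE1' : 1 ≤ Real.exp (μ * (p.2 - x₀ - s)) + Real.exp (-(μ * (p.2 - x₀ + s))) := by
          rcases hx2 with h | h <;> rw [h]
          · have h1 : Real.exp (-(μ * (x₀ - s - x₀ + s))) = 1 := by
              rw [show x₀ - s - x₀ + s = 0 by ring, mul_zero, neg_zero, Real.exp_zero]
            rw [h1]
            linarith [Real.exp_pos (μ * (x₀ - s - x₀ - s))]
          · have h1 : Real.exp (μ * (x₀ + s - x₀ - s)) = 1 := by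
              rw [show x₀ + s - x₀ - s = 0 by ring, mul_zero, Real.exp_zero]
            rw [h1]
            linarith [Real.exp_pos (-(μ * (x₀ + s - x₀ + s)))]
        have hsinp : 0 < Real.sin (π * p.1) :=
          Real.sin_pos_of_pos_of_lt_pi (mul_pos pi_pos ht.1)
            (mul_lt_of_lt_one_right pi_pos ht.2)
        have hmul : B * 1 * Real.sin (π * p.1) ≤
            B * (Real.exp (μ * (p.2 - x₀ - s)) + Real.exp (-(μ * (p.2 - x₀ + s)))) *
              Real.sin (π * p.1) :=
          mul_le_mul_of_nonneg_right
            (mul_le_mul_of_nonneg_left hE1' (by linarith : (0:ℝ) ≤ B)) hsinp.le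
        linarith [hub.2, hmul]
  -- conclude at the center point
  have hvz := isMinOn_iff.mp hpmin (t₀, x₀) hzS
  have hzval : B * (Real.exp (μ * (x₀ - x₀ - s)) + Real.exp (-(μ * (x₀ - x₀ + s)))) *
      Real.sin (π * t₀) - F₁ (t₀, x₀) + F₂ (t₀, x₀) ≥ 0 := le_trans hp0 hvz
  have harg1 : μ * (x₀ - x₀ - s) = -(μ * s) := by ring
  have harg2 : -(μ * (x₀ - x₀ + s)) = -(μ * s) := by ring
  rw [harg1, harg2] at hzval
  have hsinle : Real.sin (π * t₀) ≤ 1 := Real.sin_le_one _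
  have hsinnn : 0 ≤ Real.sin (π * t₀) :=
    Real.sin_nonneg_of_nonneg_of_le_pi (by nlinarith [pi_pos, hzt.1]) (by nlinarith [pi_pos, hzt.2])
  have hepos : 0 < Real.exp (-(μ * s)) := Real.exp_pos _
  have hgoal : -μ * s = -(μ * s) := by ring
  rw [hgoal]
  have hfac : 0 ≤ B * (Real.exp (-(μ * s)) + Real.exp (-(μ * s))) :=
    mul_nonneg (by linarith) (by linarith)
  have hmul : B * (Real.exp (-(μ * s)) + Real.exp (-(μ * s))) * Real.sin (π * t₀) ≤
      B * (Real.exp (-(μ * s)) + Real.exp (-(μ * s))) * 1 :=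
    mul_le_mul_of_nonneg_left hsinle hfac
  linarith [hzval, hmul]

set_option maxHeartbeats 2000000 in
theorem statement11 (ε B : ℝ) (hε : 0 < ε) (hB : 1 < B) :
    ∃ c C : ℝ, 0 < c ∧ 1 < C ∧
      ∀ L L₀ : ℝ, 1 < L → L / (2 * B) ≤ L₀ → L₀ ≤ 2 * B * L →
      ∀ F₁ F₂ : ℝ × ℝ → ℝ, ∀ t₀ x₀ A : ℝ,
        AdmE ε F₁ (rect11 L₀) → AdmE ε F₂ (rect11 L₀) →
        ContDiffOn ℝ 5 F₁ (closure (rect11 L₀)) →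
        ContDiffOn ℝ 5 F₂ (closure (rect11 L₀)) →
        SatisfiesE F₁ (rect11 L₀) → SatisfiesE F₂ (rect11 L₀) →
        (t₀, x₀) ∈ rect11 L₀ →
        Icc (x₀ - 2 * Real.sqrt L) (x₀ + 2 * Real.sqrt L) ⊆ Ioo (-L₀) L₀ →
        0 ≤ A → A ≤ B →
        (∀ w ∈ rect11 L₀,
          Real.sqrt ((pdT F₁ w) ^ 2 + (pdX F₁ w) ^ 2) ≤ B ∧
          Real.sqrt ((pdT F₂ w) ^ 2 + (pdX F₂ w) ^ 2) ≤ B ∧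
          |pdT (pdT F₁) w| ≤ B / L ∧ |pdT (pdX F₁) w| ≤ B / L ∧
          |pdX (pdT F₁) w| ≤ B / L ∧ |pdX (pdX F₁) w| ≤ B / L ∧
          |pdT (pdT F₂) w| ≤ B / L ∧ |pdT (pdX F₂) w| ≤ B / L ∧
          |pdX (pdT F₂) w| ≤ B / L ∧ |pdX (pdX F₂) w| ≤ B / L) →
        ((∑ j ∈ Finset.Icc 1 5, ⨆ i ∈ Finset.range (j + 1), ⨆ z ∈ rect11 L₀,
            ENNReal.ofReal |pdIter F₁ i (j - i) z|) ≤ ENNReal.ofReal B) →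
        ((∑ j ∈ Finset.Icc 1 5, ⨆ i ∈ Finset.range (j + 1), ⨆ z ∈ rect11 L₀,
            ENNReal.ofReal |pdIter F₂ i (j - i) z|) ≤ ENNReal.ofReal B) →
        (∀ w ∈ frontier (rect11 L₀),
          Real.sqrt ((w.1 - t₀) ^ 2 + (w.2 - x₀) ^ 2) ≤ 2 * Real.sqrt L → F₁ w = F₂ w) →
        (∀ w ∈ frontier (rect11 L₀), |F₁ w - F₂ w| ≤ A) →
        |F₁ (t₀, x₀) - F₂ (t₀, x₀)| ≤
          C * (L ^ (-(1 : ℝ) / 8) * A + Real.exp (-c * L ^ ((1 : ℝ) / 8))) := by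
  have hεi : 0 < ε⁻¹ := inv_pos.mpr hε
  refine ⟨1 / (2 * (1 + ε⁻¹ ^ 4 + 4 * B * ε⁻¹ ^ 11)), 2 * B + 2,
    div_pos one_pos (by nlinarith [pow_pos hεi 4, pow_pos hεi 11, hB]), by linarith, ?_⟩
  intro L L₀ hL _ _ F₁ F₂ t₀ x₀ A hA1 hA2 hC1 hC2 hE1 hE2 hzmem hIcc hA0 _ hgrad _ _ hbdeq _
  have h12 := key_estimate ε B L L₀ hε hB hL F₁ F₂ t₀ x₀ hA1 hA2 hC1 hC2 hE1 hE2 hzmem hIcc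
    (fun w hw => (hgrad w hw).1) (fun w hw => (hgrad w hw).2.1)
    (fun w hw => (hgrad w hw).2.2.2.2.2.2.2.2.2) hbdeq
  have h21 := key_estimate ε B L L₀ hε hB hL F₂ F₁ t₀ x₀ hA2 hA1 hC2 hC1 hE2 hE1 hzmem hIcc
    (fun w hw => (hgrad w hw).2.1) (fun w hw => (hgrad w hw).1)
    (fun w hw => (hgrad w hw).2.2.2.2.2.1) (fun w hw hd => (hbdeq w hw hd).symm)
  set c := 1 / (2 * (1 + ε⁻¹ ^ 4 + 4 * B * ε⁻¹ ^ 11)) with hcdef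
  have hcpos : 0 < c := by
    rw [hcdef]
    exact div_pos one_pos (by nlinarith [pow_pos hεi 4, pow_pos hεi 11, hB])
  have hs : L ^ ((1:ℝ) / 8) ≤ Real.sqrt (4 * L - 1) := by
    have h1 : Real.sqrt L ≤ Real.sqrt (4 * L - 1) := Real.sqrt_le_sqrt (by linarith)
    have h2 : L ^ ((1:ℝ) / 8) ≤ L ^ (1 / (2:ℝ)) :=
      Real.rpow_le_rpow_of_exponent_le hL.le (by norm_num)
    have h3 : Real.sqrt L = L ^ (1 / (2:ℝ)) := Real.sqrt_eq_rpow L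
    linarith [h3.symm.le, h3.le]
  have hexp : Real.exp (-c * Real.sqrt (4 * L - 1)) ≤ Real.exp (-c * L ^ ((1:ℝ) / 8)) := by
    apply Real.exp_le_exp.mpr
    have := mul_le_mul_of_nonneg_left hs hcpos.le
    linarith [this]
  have habs : |F₁ (t₀, x₀) - F₂ (t₀, x₀)| ≤
      2 * B * Real.exp (-c * Real.sqrt (4 * L - 1)) := by
    rw [abs_le]
    constructor
    · have : -(c) * Real.sqrt (4 * L - 1) = -c * Real.sqrt (4 * L - 1) := by ring
      rw [this] at h21
      linarith [h21]
    · have : -(c) * Real.sqrt (4 * L - 1) = -c * Real.sqrt (4 * L - 1) := by ring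
      rw [this] at h12
      linarith [h12]
  have hrpownn : 0 ≤ L ^ (-(1:ℝ) / 8) * A :=
    mul_nonneg (Real.rpow_nonneg (by linarith) _) hA0
  have hexppos : 0 < Real.exp (-c * L ^ ((1:ℝ) / 8)) := Real.exp_pos _
  have e1 : 2 * B * Real.exp (-c * Real.sqrt (4 * L - 1)) ≤
      2 * B * Real.exp (-c * L ^ ((1:ℝ) / 8)) :=
    mul_le_mul_of_nonneg_left hexp (by linarith)
  have e2 : (2 * B + 2) * (L ^ (-(1:ℝ) / 8) * A + Real.exp (-c * L ^ ((1:ℝ) / 8))) =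
      (2 * B + 2) * (L ^ (-(1:ℝ) / 8) * A) + (2 * B + 2) * Real.exp (-c * L ^ ((1:ℝ) / 8)) := by
    ring
  have e3 : 0 ≤ (2 * B + 2) * (L ^ (-(1:ℝ) / 8) * A) :=
    mul_nonneg (by linarith) hrpownn
  linarith [habs, e1, e2.le, e2.ge, e3, hexppos]

end
end
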